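/- arXiv:1607.01441 — 13 statements merged into one kernel-verified Lean document; each statement's English description precedes it below -/
import Mathlib

section
/- Let f be a submodular set function on a finite set Ω. For any n sets A₁, …, Aₙ ⊆ Ω, letting E_j denote the set of elements of Ω that belong to at least j of the sets A₁, …, Aₙ, one has Σ_{i=1}^n f(A_i) ≥ Σ_{j=1}^n f(E_j). -/
open Finset

/-- `atLeastSets A n j` : the set of elements of `Ω` belonging to at least `j`
of the sets `A 1, …, A n`. -/
noncomputable def atLeastSets {Ω : Type*} [Fintype Ω] [DecidableEq Ω]
    (A : ℕ → Finset Ω) (n j : ℕ) : Finset Ω :=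
  Finset.univ.filter fun x => j ≤ ((Finset.Icc 1 n).filter fun i => x ∈ A i).card

lemma atLeastSets_zero {Ω : Type*} [Fintype Ω] [DecidableEq Ω]
    (A : ℕ → Finset Ω) (n : ℕ) : atLeastSets A n 0 = Finset.univ := by
  simp [atLeastSets]

lemma atLeastSets_top {Ω : Type*} [Fintype Ω] [DecidableEq Ω]
    (A : ℕ → Finset Ω) (n : ℕ) : atLeastSets A n (n + 1) = ∅ := by
  ext x
  simp only [atLeastSets, Finset.mem_filter, Finset.mem_univ, true_and,
    Finset.notMem_empty, iff_false, not_le]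
  have h1 := Finset.card_filter_le (Finset.Icc 1 n) (fun i => x ∈ A i)
  have h2 : (Finset.Icc 1 n).card = n := by simp
  omega

lemma atLeastSets_subset {Ω : Type*} [Fintype Ω] [DecidableEq Ω]
    (A : ℕ → Finset Ω) (n j : ℕ) : atLeastSets A n (j + 1) ⊆ atLeastSets A n j := by
  intro x hx
  simp only [atLeastSets, Finset.mem_filter, Finset.mem_univ, true_and] at hx ⊢
  omega

lemma atLeastSets_succ {Ω : Type*} [Fintype Ω] [DecidableEq Ω]
    (A : ℕ → Finset Ω) (n j : ℕ) :
    atLeastSets A (n + 1) (j + 1) =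
      atLeastSets A n (j + 1) ∪ (atLeastSets A n j ∩ A (n + 1)) := by
  ext x
  have hins : Finset.Icc 1 (n + 1) = insert (n + 1) (Finset.Icc 1 n) := by
    ext i; simp [Finset.mem_Icc, Finset.mem_insert]; omega
  have hnm : (n + 1) ∉ Finset.Icc 1 n := by simp
  simp only [atLeastSets, Finset.mem_filter, Finset.mem_univ, true_and, hins,
    Finset.filter_insert, Finset.mem_union, Finset.mem_inter]
  by_cases hx : x ∈ A (n + 1)
  · rw [if_pos hx, Finset.card_insert_of_notMem (by simp [hnm])]
    simp [hx]; omega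
  · rw [if_neg hx]
    simp [hx]

lemma sum_Icc_one_eq (g : ℕ → ℝ) (m : ℕ) :
    ∑ j ∈ Finset.Icc 1 m, g j = ∑ k ∈ Finset.range m, g (k + 1) := by
  rw [← Finset.Ico_add_one_right_eq_Icc, Finset.sum_Ico_eq_sum_range]
  simp [Nat.add_comm]

/-- For a submodular set function `f` on a finite set `Ω` and sets `A₁, …, Aₙ ⊆ Ω`,
`Σ_{i=1}^n f(A_i) ≥ Σ_{j=1}^n f(E_j)`, where `E_j` is the set of elements that belong
to at least `j` of the sets `A_i`. -/
theorem stmt_1 {Ω : Type*} [Fintype Ω] [DecidableEq Ω]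
    (f : Finset Ω → ℝ)
    (hf : ∀ A B : Finset Ω, f (A ∪ B) + f (A ∩ B) ≤ f A + f B)
    (n : ℕ) (A : ℕ → Finset Ω) :
    ∑ j ∈ Finset.Icc 1 n, f (atLeastSets A n j) ≤ ∑ i ∈ Finset.Icc 1 n, f (A i) := by
  induction n with
  | zero => simp
  | succ n ih =>
    set F : ℕ → Finset Ω := fun j => atLeastSets A n j with hF
    have key : ∀ k : ℕ,
        f (atLeastSets A (n + 1) (k + 1)) + f (F (k + 1) ∩ A (n + 1)) ≤
          f (F (k + 1)) + f (F k ∩ A (n + 1)) := by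
      intro k
      have hinter : F (k + 1) ∩ (F k ∩ A (n + 1)) = F (k + 1) ∩ A (n + 1) := by
        rw [← Finset.inter_assoc,
          Finset.inter_eq_left.mpr (atLeastSets_subset A n k)]
      have := hf (F (k + 1)) (F k ∩ A (n + 1))
      rw [hinter] at this
      rw [atLeastSets_succ]
      exact this
    have hsum := Finset.sum_le_sum (fun k (_ : k ∈ Finset.range (n + 1)) => key k)
    rw [Finset.sum_add_distrib, Finset.sum_add_distrib] at hsum
    have htel : ∑ k ∈ Finset.range (n + 1),
        (f (F k ∩ A (n + 1)) - f (F (k + 1) ∩ A (n + 1)))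
        = f (F 0 ∩ A (n + 1)) - f (F (n + 1) ∩ A (n + 1)) :=
      Finset.sum_range_sub' (fun k => f (F k ∩ A (n + 1))) (n + 1)
    rw [Finset.sum_sub_distrib] at htel
    have hF0 : F 0 ∩ A (n + 1) = A (n + 1) := by
      rw [hF]; simp [atLeastSets_zero]
    have hFn : F (n + 1) = ∅ := atLeastSets_top A n
    have hrange : ∑ k ∈ Finset.range (n + 1), f (F (k + 1))
        = (∑ k ∈ Finset.range n, f (F (k + 1))) + f (F (n + 1)) := by
      rw [Finset.sum_range_succ]
    have hE : ∑ j ∈ Finset.Icc 1 (n + 1), f (atLeastSets A (n + 1) j)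
        = ∑ k ∈ Finset.range (n + 1), f (atLeastSets A (n + 1) (k + 1)) :=
      sum_Icc_one_eq _ _
    have hFsum : ∑ j ∈ Finset.Icc 1 n, f (F j)
        = ∑ k ∈ Finset.range n, f (F (k + 1)) := sum_Icc_one_eq _ _
    have hA : ∑ i ∈ Finset.Icc 1 (n + 1), f (A i)
        = (∑ i ∈ Finset.Icc 1 n, f (A i)) + f (A (n + 1)) := by
      rw [← Finset.Ico_add_one_right_eq_Icc, Finset.sum_Ico_succ_top (by omega), Finset.Ico_add_one_right_eq_Icc]
    have ih' : ∑ k ∈ Finset.range n, f (F (k + 1)) ≤ ∑ i ∈ Finset.Icc 1 n, f (A i) := by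
      rw [← hFsum]; exact ih
    rw [hE, hA]
    have hc : f (F (n + 1)) = f (F (n + 1) ∩ A (n + 1)) := by rw [hFn]; simp
    have hfF0 : f (F 0 ∩ A (n + 1)) = f (A (n + 1)) := by rw [hF0]
    linarith [hsum, htel, hrange, ih', hc, hfF0]
end

section
/- Let f be a submodular set function on a finite set Ω, let A₁, …, Aₙ, A_{n+1} ⊆ Ω, and let 0 ≤ k < n. Then f(⋃_{I⊆[1:n],|I|=k} (A_{n+1} ∩ ⋂_{i∈I} A_i)) + f(⋃_{I⊆[1:n],|I|=k+1} ⋂_{i∈I} A_i) ≥ f(⋃_{I⊆[1:n+1],|I|=k+1} ⋂_{i∈I} A_i) + f(⋃_{I⊆[1:n],|I|=k+1} (A_{n+1} ∩ ⋂_{i∈I} A_i)). -/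
open Finset

/-- Property 1 of the paper: for a submodular set function `f` on a finite set `Ω`,
sets `A₁, …, A_{n+1} ⊆ Ω`, and `0 ≤ k < n`,
`f(⋃_{I⊆[1:n],|I|=k} (A_{n+1} ∩ ⋂_{i∈I} A_i)) + f(⋃_{I⊆[1:n],|I|=k+1} ⋂_{i∈I} A_i)
 ≥ f(⋃_{I⊆[1:n+1],|I|=k+1} ⋂_{i∈I} A_i) + f(⋃_{I⊆[1:n],|I|=k+1} (A_{n+1} ∩ ⋂_{i∈I} A_i))`,
where the intersection over the empty index family is all of `Ω` (`⊤`). -/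
theorem stmt_2 {Ω : Type*} [Fintype Ω] [DecidableEq Ω]
    (f : Finset Ω → ℝ)
    (hf : ∀ A B : Finset Ω, f (A ∪ B) + f (A ∩ B) ≤ f A + f B)
    (n k : ℕ) (hk : k < n) (A : ℕ → Finset Ω) :
    f (((Finset.Icc 1 (n+1)).powerset.filter fun I => I.card = k+1).sup fun I => I.inf A)
      + f (((Finset.Icc 1 n).powerset.filter fun I => I.card = k+1).sup
            fun I => A (n+1) ∩ I.inf A)
    ≤ f (((Finset.Icc 1 n).powerset.filter fun I => I.card = k).sup
            fun I => A (n+1) ∩ I.inf A)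
      + f (((Finset.Icc 1 n).powerset.filter fun I => I.card = k+1).sup fun I => I.inf A) := by
  set B : Finset Ω := ((Finset.Icc 1 n).powerset.filter fun I => I.card = k).sup
      fun I => A (n+1) ∩ I.inf A with hB
  set C : Finset Ω := ((Finset.Icc 1 n).powerset.filter fun I => I.card = k+1).sup
      fun I => I.inf A with hC
  have h1 : (((Finset.Icc 1 (n+1)).powerset.filter fun I => I.card = k+1).sup
      fun I => I.inf A) = B ∪ C := by
    ext x
    simp only [hB, hC, Finset.mem_union, Finset.mem_sup, Finset.mem_filter,
      Finset.mem_powerset, Finset.mem_inter]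
    constructor
    · rintro ⟨I, ⟨hIs, hIc⟩, hx⟩
      by_cases hn : n + 1 ∈ I
      · left
        refine ⟨I.erase (n+1), ⟨?_, ?_⟩, ?_, ?_⟩
        · intro a ha
          have ha' := hIs (Finset.mem_of_mem_erase ha)
          simp only [Finset.mem_Icc] at ha' ⊢
          have := Finset.ne_of_mem_erase ha
          omega
        · rw [Finset.card_erase_of_mem hn, hIc]; omega
        · exact (Finset.inf_le hn : I.inf A ⊆ _) hx
        · exact (Finset.inf_mono (Finset.erase_subset _ _) : I.inf A ⊆ _) hx
      · right
        refine ⟨I, ⟨?_, hIc⟩, hx⟩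
        intro a ha
        have ha' := hIs ha
        simp only [Finset.mem_Icc] at ha' ⊢
        have : a ≠ n + 1 := fun h => hn (h ▸ ha)
        omega
    · rintro (⟨J, ⟨hJs, hJc⟩, hxA, hxJ⟩ | ⟨I, ⟨hIs, hIc⟩, hx⟩)
      · have hnJ : n + 1 ∉ J := by
          intro h
          have := hJs h
          simp [Finset.mem_Icc] at this
        refine ⟨insert (n+1) J, ⟨?_, ?_⟩, ?_⟩
        · intro a ha
          rcases Finset.mem_insert.mp ha with h | h
          · simp [Finset.mem_Icc, h]
          · have := hJs h
            simp only [Finset.mem_Icc] at this ⊢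
            omega
        · rw [Finset.card_insert_of_notMem hnJ, hJc]
        · rw [Finset.inf_insert]
          exact Finset.mem_inter.mpr ⟨hxA, hxJ⟩
      · exact ⟨I, ⟨fun a ha => by
          have := hIs ha; simp only [Finset.mem_Icc] at this ⊢; omega, hIc⟩, hx⟩
  have h2 : (((Finset.Icc 1 n).powerset.filter fun I => I.card = k+1).sup
      fun I => A (n+1) ∩ I.inf A) = B ∩ C := by
    ext x
    simp only [hB, hC, Finset.mem_inter, Finset.mem_sup, Finset.mem_filter,
      Finset.mem_powerset]
    constructor
    · rintro ⟨I, ⟨hIs, hIc⟩, hx⟩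
      obtain ⟨hxA, hxI⟩ := hx
      obtain ⟨J, hJI, hJc⟩ := Finset.exists_subset_card_eq (s := I) (n := k) (by omega)
      exact ⟨⟨J, ⟨hJI.trans hIs, hJc⟩, hxA, (Finset.inf_mono hJI : I.inf A ⊆ _) hxI⟩,
        ⟨I, ⟨hIs, hIc⟩, hxI⟩⟩
    · rintro ⟨⟨J, _, hxB, _⟩, ⟨I, ⟨hIs, hIc⟩, hxI⟩⟩
      exact ⟨I, ⟨hIs, hIc⟩, hxB, hxI⟩
  rw [h1, h2]
  have := hf B C
  linarith
end

section
/- Partition lemma for FD capacity: Let ℓ, r : [1:N] → ℝ≥0 and define for a nonempty finite set M ⊆ [1:N] the value C^FD(M) = min over A ⊆ M of (max_{i∈A} ℓ_i + max_{i∈M\A} r_i), where the max over the empty set is 0. Then for any partition of [1:N] into two nonempty sets K and [1:N]\K, C^FD([1:N]) ≤ C^FD(K) + C^FD([1:N]\K). -/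
open Finset
open scoped NNReal

/-- FD min-cut of the diamond network restricted to relay set `M`:
`min_{A ⊆ M} (max_{i∈A} ℓ_i + max_{i∈M\A} r_i)`, with `max ∅ = 0`. -/
noncomputable def CFD (ℓ r : ℕ → ℝ≥0) (M : Finset ℕ) : ℝ≥0 :=
  M.powerset.inf' (Finset.powerset_nonempty M) fun A => A.sup ℓ + (M \ A).sup r

/-- Partition lemma for FD capacity: for any partition of `[1:N]` into two nonempty
sets `K` and `[1:N]\K`, `C^FD([1:N]) ≤ C^FD(K) + C^FD([1:N]\K)`. -/
theorem stmt_5 (N : ℕ) (hN : 2 ≤ N) (ℓ r : ℕ → ℝ≥0)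
    (K : Finset ℕ) (hK : K ⊆ Finset.Icc 1 N)
    (hKne : K.Nonempty) (hKcne : (Finset.Icc 1 N \ K).Nonempty) :
    CFD ℓ r (Finset.Icc 1 N) ≤ CFD ℓ r K + CFD ℓ r (Finset.Icc 1 N \ K) := by
  obtain ⟨A, hA, hAeq⟩ := Finset.exists_mem_eq_inf' (Finset.powerset_nonempty K)
    (fun A => A.sup ℓ + (K \ A).sup r)
  obtain ⟨B, hB, hBeq⟩ := Finset.exists_mem_eq_inf' (Finset.powerset_nonempty (Finset.Icc 1 N \ K))
    (fun A => A.sup ℓ + ((Finset.Icc 1 N \ K) \ A).sup r)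
  rw [Finset.mem_powerset] at hA hB
  have hBsub : B ⊆ Finset.Icc 1 N \ K := hB
  have hsub : A ∪ B ⊆ Finset.Icc 1 N := by
    intro x hx
    rcases Finset.mem_union.mp hx with h | h
    · exact hK (hA h)
    · exact (Finset.mem_sdiff.mp (hBsub h)).1
  have key : Finset.Icc 1 N \ (A ∪ B) = (K \ A) ∪ ((Finset.Icc 1 N \ K) \ B) := by
    ext x
    simp only [Finset.mem_sdiff, Finset.mem_union, Finset.mem_sdiff]
    constructor
    · rintro ⟨hx, hnab⟩
      push_neg at hnab
      by_cases hxK : x ∈ K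
      · exact Or.inl ⟨hxK, hnab.1⟩
      · exact Or.inr ⟨⟨hx, hxK⟩, hnab.2⟩
    · rintro (⟨hxK, hna⟩ | ⟨⟨hx, hxK⟩, hnb⟩)
      · refine ⟨hK hxK, ?_⟩
        rintro (h | h)
        · exact hna h
        · exact (Finset.mem_sdiff.mp (hBsub h)).2 hxK
      · refine ⟨hx, ?_⟩
        rintro (h | h)
        · exact hxK (hA h)
        · exact hnb h
  have hle : CFD ℓ r (Finset.Icc 1 N) ≤
      (A ∪ B).sup ℓ + (Finset.Icc 1 N \ (A ∪ B)).sup r :=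
    Finset.inf'_le _ (Finset.mem_powerset.mpr hsub)
  calc CFD ℓ r (Finset.Icc 1 N)
      ≤ (A ∪ B).sup ℓ + (Finset.Icc 1 N \ (A ∪ B)).sup r := hle
    _ = (A.sup ℓ ⊔ B.sup ℓ) + ((K \ A).sup r ⊔ ((Finset.Icc 1 N \ K) \ B).sup r) := by
        rw [key, Finset.sup_union, Finset.sup_union]
    _ ≤ (A.sup ℓ + B.sup ℓ) + ((K \ A).sup r + ((Finset.Icc 1 N \ K) \ B).sup r) := by
        gcongr <;> simp [sup_le_iff, le_add_right, le_add_left]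
    _ = (A.sup ℓ + (K \ A).sup r) + (B.sup ℓ + ((Finset.Icc 1 N \ K) \ B).sup r) := by ring
    _ = CFD ℓ r K + CFD ℓ r (Finset.Icc 1 N \ K) := by rw [CFD, CFD, ← hAeq, ← hBeq]
end

section
/- Cut-combining lemma for diamond networks: For ℓ, r : [1:N] → ℝ≥0 and any choice of sets A_j ⊆ [1:N]\{j} for j ∈ [1:N], there exist N−1 sets A_{F,1}, …, A_{F,N−1} ⊆ [1:N] (namely A_{F,j} = E_j, the set of elements appearing in at least j of the A_i, which depends only on the A_i and not on ℓ, r) such that Σ_{j=1}^N (max_{i∈A_j} ℓ_i + max_{i∈([1:N]\{j})\A_j} r_i) ≥ Σ_{j=1}^{N−1} (max_{i∈A_{F,j}} ℓ_i + max_{i∈[1:N]\A_{F,j}} r_i). -/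
open Finset
open scoped NNReal

/-- The set of elements of `[1:N]` appearing in at least `j` of the sets `A 1, …, A N`. -/
def atLeastIn (N : ℕ) (A : ℕ → Finset ℕ) (j : ℕ) : Finset ℕ :=
  (Finset.Icc 1 N).filter fun x => j ≤ ((Finset.Icc 1 N).filter fun i => x ∈ A i).card

def myE (I : Finset ℕ) (A : ℕ → Finset ℕ) (j : ℕ) : Finset ℕ :=
  (I.biUnion A).filter fun x => j ≤ (I.filter fun i => x ∈ A i).card

lemma mem_myE {I : Finset ℕ} {A : ℕ → Finset ℕ} {j : ℕ} (hj : 1 ≤ j) {x : ℕ} :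
    x ∈ myE I A j ↔ j ≤ (I.filter fun i => x ∈ A i).card := by
  constructor
  · exact fun h => (mem_filter.mp h).2
  · intro h
    refine mem_filter.mpr ⟨?_, h⟩
    have hpos : 0 < (I.filter fun i => x ∈ A i).card := lt_of_lt_of_le hj h
    obtain ⟨i, hi⟩ := card_pos.mp hpos
    exact mem_biUnion.mpr ⟨i, (mem_filter.mp hi).1, (mem_filter.mp hi).2⟩

lemma key (f : ℕ → ℝ≥0) (A : ℕ → Finset ℕ) :
    ∀ n (I : Finset ℕ), I.card = n →
      ∑ j ∈ Finset.Icc 1 n, (myE I A j).sup f ≤ ∑ i ∈ I, (A i).sup f := by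
  intro n
  induction n with
  | zero => intro I hI; simp
  | succ n ih =>
    intro I hI
    have hne : I.Nonempty := card_pos.mp (by omega)
    obtain ⟨i₀, hi₀, hmax⟩ := I.exists_max_image (fun i => (A i).sup f) hne
    have hcard' : (I.erase i₀).card = n := by rw [card_erase_of_mem hi₀, hI]; rfl
    have h1 : (myE I A 1).sup f ≤ (A i₀).sup f :=
      calc (myE I A 1).sup f ≤ (I.biUnion A).sup f := sup_mono (filter_subset _ _)
        _ = I.sup (fun i => (A i).sup f) := sup_biUnion _ _
        _ ≤ (A i₀).sup f := Finset.sup_le hmax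
    have hsub : ∀ j : ℕ, 1 ≤ j → myE I A (j+1) ⊆ myE (I.erase i₀) A j := by
      intro j hj x hx
      rw [mem_myE (by omega)] at hx
      rw [mem_myE hj]
      have he : ((I.erase i₀).filter fun i => x ∈ A i)
          = (I.filter fun i => x ∈ A i).erase i₀ := filter_erase _ _ _
      rw [he]
      have := Finset.pred_card_le_card_erase (s := I.filter fun i => x ∈ A i) (a := i₀)
      omega
    have hsum : ∑ j ∈ Finset.Icc 1 (n+1), (myE I A j).sup f
        = (myE I A 1).sup f + ∑ j ∈ Finset.Icc 1 n, (myE I A (j+1)).sup f := by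
      rw [← Finset.Ico_add_one_right_eq_Icc, Finset.sum_Ico_eq_sum_range,
        ← Finset.Ico_add_one_right_eq_Icc, Finset.sum_Ico_eq_sum_range]
      simp only [Nat.add_sub_cancel]
      rw [Finset.sum_range_succ']
      rw [add_comm]
      simp [Nat.add_comm, Nat.add_assoc]
    rw [hsum]
    calc (myE I A 1).sup f + ∑ j ∈ Finset.Icc 1 n, (myE I A (j+1)).sup f
        ≤ (A i₀).sup f + ∑ j ∈ Finset.Icc 1 n, (myE (I.erase i₀) A j).sup f := by
          refine add_le_add h1 (Finset.sum_le_sum fun j hj => ?_)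
          exact Finset.sup_mono (hsub j (by rw [mem_Icc] at hj; omega))
      _ ≤ (A i₀).sup f + ∑ i ∈ I.erase i₀, (A i).sup f :=
          add_le_add_right (ih _ hcard') _
      _ = ∑ i ∈ I, (A i).sup f := Finset.add_sum_erase I (fun i => (A i).sup f) hi₀

/-- Cut-combining lemma for diamond networks: for any cuts `A_j ⊆ [1:N]\{j}`, taking
`A_{F,j} = E_j` (the set of elements appearing in at least `j` of the `A_i`, which
depends only on the `A_i`, not on `ℓ, r`),
`Σ_{j=1}^N (max_{i∈A_j} ℓ_i + max_{i∈([1:N]\{j})\A_j} r_i)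
  ≥ Σ_{j=1}^{N−1} (max_{i∈E_j} ℓ_i + max_{i∈[1:N]\E_j} r_i)`. -/
theorem stmt_9 (N : ℕ) (hN : 2 ≤ N) (ℓ r : ℕ → ℝ≥0)
    (A : ℕ → Finset ℕ)
    (hA : ∀ j ∈ Finset.Icc 1 N, A j ⊆ Finset.Icc 1 N \ {j}) :
    ∑ j ∈ Finset.Icc 1 (N - 1),
        ((atLeastIn N A j).sup ℓ + (Finset.Icc 1 N \ atLeastIn N A j).sup r)
    ≤ ∑ j ∈ Finset.Icc 1 N,
        ((A j).sup ℓ + ((Finset.Icc 1 N \ {j}) \ A j).sup r) := by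
  set B : ℕ → Finset ℕ := fun i => (Finset.Icc 1 N \ {i}) \ A i with hB
  have hBsub : ∀ i, B i ⊆ Finset.Icc 1 N := fun i =>
    (sdiff_subset).trans sdiff_subset
  have hcnt : ∀ x ∈ Finset.Icc 1 N,
      ((Finset.Icc 1 N).filter fun i => x ∈ B i).card + 1
        + ((Finset.Icc 1 N).filter fun i => x ∈ A i).card = N := by
    intro x hx
    have hxA : x ∉ A x := fun h => by
      have := hA x hx h
      rw [mem_sdiff, mem_singleton] at this
      exact this.2 rfl
    have hfB : ((Finset.Icc 1 N).filter fun i => x ∈ B i)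
        = ((Finset.Icc 1 N).filter fun i => x ∉ A i).erase x := by
      ext i
      simp only [mem_erase, mem_filter, hB, mem_sdiff, mem_singleton]
      constructor
      · rintro ⟨hi, ⟨hxI, hxi⟩, hna⟩
        exact ⟨fun h => hxi h.symm, hi, hna⟩
      · rintro ⟨hne, hi, hna⟩
        exact ⟨hi, ⟨hx, fun h => hne h.symm⟩, hna⟩
    have hxmem : x ∈ (Finset.Icc 1 N).filter fun i => x ∉ A i :=
      mem_filter.mpr ⟨hx, hxA⟩
    have h2 := Finset.card_filter_add_card_filter_not
      (s := Finset.Icc 1 N) (p := fun i => x ∈ A i)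
    have hN' : (Finset.Icc 1 N).card = N := by rw [Nat.card_Icc]; omega
    have hpos : 1 ≤ ((Finset.Icc 1 N).filter fun i => x ∉ A i).card :=
      Finset.card_pos.mpr ⟨x, hxmem⟩
    rw [hfB, card_erase_of_mem hxmem]
    omega
  have hE : ∀ j ∈ Finset.Icc 1 (N-1), atLeastIn N A j = myE (Finset.Icc 1 N) A j := by
    intro j hj
    rw [mem_Icc] at hj
    ext x
    rw [mem_myE (by omega : 1 ≤ j)]
    simp only [atLeastIn, mem_filter]
    constructor
    · exact fun h => h.2
    · intro h
      refine ⟨?_, h⟩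
      have hp : 0 < ((Finset.Icc 1 N).filter fun i => x ∈ A i).card := by omega
      obtain ⟨i, hi⟩ := Finset.card_pos.mp hp
      rw [mem_filter] at hi
      exact (mem_sdiff.mp (hA i hi.1 hi.2)).1
  have hF : ∀ j ∈ Finset.Icc 1 (N-1),
      Finset.Icc 1 N \ atLeastIn N A j = myE (Finset.Icc 1 N) B (N - j) := by
    intro j hj
    rw [mem_Icc] at hj
    ext x
    rw [mem_myE (by omega : 1 ≤ N - j)]
    simp only [mem_sdiff, atLeastIn, mem_filter, not_and, not_le]
    constructor
    · rintro ⟨hx, h⟩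
      have h2 := h hx
      have := hcnt x hx
      omega
    · intro h
      have hx : x ∈ Finset.Icc 1 N := by
        have hp : 0 < ((Finset.Icc 1 N).filter fun i => x ∈ B i).card := by omega
        obtain ⟨i, hi⟩ := Finset.card_pos.mp hp
        rw [mem_filter] at hi
        exact hBsub i hi.2
      have := hcnt x hx
      exact ⟨hx, fun _ => by omega⟩
  have hNcard : (Finset.Icc 1 N).card = N := by rw [Nat.card_Icc]; omega
  calc ∑ j ∈ Finset.Icc 1 (N-1),
        ((atLeastIn N A j).sup ℓ + (Finset.Icc 1 N \ atLeastIn N A j).sup r)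
      = ∑ j ∈ Finset.Icc 1 (N-1), ((myE (Finset.Icc 1 N) A j).sup ℓ
          + (myE (Finset.Icc 1 N) B (N - j)).sup r) := by
        refine Finset.sum_congr rfl fun j hj => ?_
        rw [hF j hj, hE j hj]
    _ = (∑ j ∈ Finset.Icc 1 (N-1), (myE (Finset.Icc 1 N) A j).sup ℓ)
          + ∑ j ∈ Finset.Icc 1 (N-1), (myE (Finset.Icc 1 N) B (N - j)).sup r :=
        Finset.sum_add_distrib
    _ ≤ (∑ j ∈ Finset.Icc 1 N, (myE (Finset.Icc 1 N) A j).sup ℓ)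
          + ∑ j ∈ Finset.Icc 1 N, (myE (Finset.Icc 1 N) B j).sup r := by
        refine add_le_add ?_ ?_
        · exact Finset.sum_le_sum_of_subset (Finset.Icc_subset_Icc_right (by omega))
        · have hre : ∑ j ∈ Finset.Icc 1 (N-1), (myE (Finset.Icc 1 N) B (N - j)).sup r
              = ∑ j ∈ Finset.Icc 1 (N-1), (myE (Finset.Icc 1 N) B j).sup r := by
            refine Finset.sum_nbij' (fun j => N - j) (fun j => N - j)
              (fun a ha => ?_) (fun a ha => ?_) (fun a ha => ?_) (fun a ha => ?_)
              (fun a ha => rfl)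
            · show N - a ∈ Finset.Icc 1 (N-1)
              rw [mem_Icc] at ha ⊢; omega
            · show N - a ∈ Finset.Icc 1 (N-1)
              rw [mem_Icc] at ha ⊢; omega
            · show N - (N - a) = a
              rw [mem_Icc] at ha; omega
            · show N - (N - a) = a
              rw [mem_Icc] at ha; omega
          rw [hre]
          exact Finset.sum_le_sum_of_subset (Finset.Icc_subset_Icc_right (by omega))
    _ ≤ (∑ i ∈ Finset.Icc 1 N, (A i).sup ℓ) + ∑ i ∈ Finset.Icc 1 N, (B i).sup r :=
        add_le_add (key ℓ A N _ hNcard) (key r B N _ hNcard)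
    _ = ∑ j ∈ Finset.Icc 1 N, ((A j).sup ℓ + ((Finset.Icc 1 N \ {j}) \ A j).sup r) := by
        rw [← Finset.sum_add_distrib]
end

section
/- FD simplification guarantee for k = N−1: For any N-relay FD diamond network with link capacities ℓ_i, r_i ≥ 0, there exists i ∈ [1:N] such that C^FD([1:N]\{i}) ≥ ((N−1)/N)·C^FD([1:N]). -/
open Finset
open scoped NNReal

/-- FD simplification guarantee for `k = N−1`: there exists `i ∈ [1:N]` with
`C^FD([1:N]\{i}) ≥ ((N−1)/N)·C^FD([1:N])`. -/
theorem stmt_10 (N : ℕ) (hN : 2 ≤ N) (ℓ r : ℕ → ℝ≥0) :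
    ∃ i ∈ Finset.Icc 1 N,
      (((N - 1 : ℕ) : ℝ≥0) / (N : ℝ≥0)) * CFD ℓ r (Finset.Icc 1 N)
        ≤ CFD ℓ r (Finset.Icc 1 N \ {i}) := by
  by_contra hcon
  push_neg at hcon
  set M : Finset ℕ := Finset.Icc 1 N with hM
  have hMne : M.Nonempty := ⟨1, by simp [hM]; omega⟩
  have hNR : (0:ℝ) < (N:ℝ) := by exact_mod_cast Nat.pos_of_ne_zero (by omega)
  -- choose optimal cuts for each subnetwork
  have hch : ∀ i : ℕ, ∃ Bi : Finset ℕ, Bi ⊆ M \ {i} ∧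
      CFD ℓ r (M \ {i}) = Bi.sup ℓ + ((M \ {i}) \ Bi).sup r := by
    intro i
    obtain ⟨Bi, hBi, hEq⟩ := Finset.exists_mem_eq_inf'
      (Finset.powerset_nonempty (M \ {i}))
      (fun A => A.sup ℓ + ((M \ {i}) \ A).sup r)
    exact ⟨Bi, Finset.mem_powerset.mp hBi, hEq⟩
  choose B hBsub hBeq using hch
  set C : ℝ := (CFD ℓ r M : ℝ) with hC
  set a : ℕ → ℝ := fun i => (((B i).sup ℓ : ℝ≥0) : ℝ) with ha
  set b : ℕ → ℝ := fun i => ((((M \ {i}) \ (B i)).sup r : ℝ≥0) : ℝ) with hb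
  have hC0 : 0 ≤ C := NNReal.coe_nonneg _
  have ha0 : ∀ i, 0 ≤ a i := fun i => NNReal.coe_nonneg _
  have hb0 : ∀ i, 0 ≤ b i := fun i => NNReal.coe_nonneg _
  have hiB : ∀ i, i ∉ B i := by
    intro i hiBi
    have := hBsub i hiBi
    simp [Finset.mem_sdiff] at this
  -- the badness hypothesis, in ℝ
  have hbad : ∀ i ∈ M, a i + b i < ((N:ℝ) - 1)/(N:ℝ) * C := by
    intro i hi
    have h0 := hcon i hi
    rw [hBeq i] at h0
    have h2 : a i + b i < ((N - 1 : ℕ):ℝ)/(N:ℝ) * C := by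
      simp only [ha, hb, hC]
      exact_mod_cast h0
    rwa [Nat.cast_sub (by omega : 1 ≤ N), Nat.cast_one] at h2
  have hfr : ((N:ℝ) - 1)/(N:ℝ) ≤ 1 := by
    rw [div_le_one hNR]; linarith
  have hbadC : ∀ i ∈ M, a i + b i < C := by
    intro i hi
    have h := hbad i hi
    have h2 : ((N:ℝ) - 1)/(N:ℝ) * C ≤ 1 * C := mul_le_mul_of_nonneg_right hfr hC0
    linarith
  -- cut bound 1 : C ≤ a i + max (r i) (b i)
  have hcut1 : ∀ i ∈ M, C ≤ a i + max ((r i : ℝ)) (b i) := by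
    intro i hi
    have hsub : B i ⊆ M := (hBsub i).trans (Finset.sdiff_subset)
    have hmem : B i ∈ M.powerset := Finset.mem_powerset.mpr hsub
    have h : CFD ℓ r M ≤ (B i).sup ℓ + (M \ (B i)).sup r :=
      Finset.inf'_le (fun A => A.sup ℓ + (M \ A).sup r) hmem
    have hins : M \ (B i) = insert i ((M \ {i}) \ (B i)) := by
      ext x
      simp only [Finset.mem_sdiff, Finset.mem_insert, Finset.mem_singleton]
      constructor
      · rintro ⟨hxM, hxB⟩
        by_cases hxi : x = i
        · exact Or.inl hxi
        · exact Or.inr ⟨⟨hxM, hxi⟩, hxB⟩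
      · rintro (hxi | ⟨⟨hxM, _⟩, hxB⟩)
        · subst hxi; exact ⟨hi, hiB _⟩
        · exact ⟨hxM, hxB⟩
    rw [hins, Finset.sup_insert] at h
    simp only [ha, hb, hC]
    exact_mod_cast h
  -- cut bound 2 : C ≤ max (ℓ i) (a i) + b i
  have hcut2 : ∀ i ∈ M, C ≤ max ((ℓ i : ℝ)) (a i) + b i := by
    intro i hi
    have hsub : insert i (B i) ⊆ M :=
      Finset.insert_subset hi ((hBsub i).trans (Finset.sdiff_subset))
    have hmem : insert i (B i) ∈ M.powerset := Finset.mem_powerset.mpr hsub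
    have h : CFD ℓ r M ≤ (insert i (B i)).sup ℓ + (M \ insert i (B i)).sup r :=
      Finset.inf'_le (fun A => A.sup ℓ + (M \ A).sup r) hmem
    have hins : M \ insert i (B i) = (M \ {i}) \ (B i) := by
      ext x
      simp only [Finset.mem_sdiff, Finset.mem_insert, Finset.mem_singleton]
      tauto
    rw [hins, Finset.sup_insert] at h
    simp only [ha, hb, hC]
    exact_mod_cast h
  -- consequences of badness
  have h3 : ∀ i ∈ M, a i < (ℓ i : ℝ) := by
    intro i hi
    by_contra hcon2
    push_neg at hcon2
    have h := hcut2 i hi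
    rw [max_eq_right hcon2] at h
    have := hbadC i hi
    linarith
  have h4 : ∀ i ∈ M, C ≤ a i + (r i : ℝ) := by
    intro i hi
    have h := hcut1 i hi
    rcases le_total ((r i : ℝ)) (b i) with hrb | hrb
    · rw [max_eq_right hrb] at h
      have := hbadC i hi
      linarith
    · rw [max_eq_left hrb] at h
      exact h
  -- cross bound : if ℓ i ≤ ℓ j, then r j ≤ b i
  have h5 : ∀ i ∈ M, ∀ j ∈ M, j ≠ i → (ℓ i : ℝ) ≤ (ℓ j : ℝ) → (r j : ℝ) ≤ b i := by
    intro i hi j hj hji hij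
    have hjB : j ∉ B i := by
      intro hjBi
      have hle : ℓ j ≤ (B i).sup ℓ := Finset.le_sup hjBi
      have hle' : (ℓ j : ℝ) ≤ a i := by
        simp only [ha]
        exact_mod_cast hle
      have := h3 i hi
      linarith
    have hjmem : j ∈ (M \ {i}) \ (B i) := by
      simp only [Finset.mem_sdiff, Finset.mem_singleton]
      exact ⟨⟨hj, hji⟩, hjB⟩
    have hle : r j ≤ ((M \ {i}) \ (B i)).sup r := Finset.le_sup hjmem
    simp only [hb]
    exact_mod_cast hle
  -- key telescoping bound
  have key : ∀ n : ℕ, ∀ S : Finset ℕ, S.card ≤ n → S ⊆ M →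
      ∀ i0 ∈ S, (∀ j ∈ S, ℓ i0 ≤ ℓ j) →
      ∑ i ∈ S, (C - a i - b i) ≤ C - a i0 := by
    intro n
    induction n with
    | zero =>
      intro S hcard _ i0 hi0 _
      have hS0 : S = ∅ := Finset.card_eq_zero.mp (Nat.le_zero.mp hcard)
      subst hS0
      simp at hi0
    | succ n ih =>
      intro S hcard hS i0 hi0 hmin
      rcases (S.erase i0).eq_empty_or_nonempty with hSe | hSe
      · have hS1 : S = {i0} := by
          apply Finset.eq_singleton_iff_unique_mem.mpr
          refine ⟨hi0, fun x hx => ?_⟩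
          by_contra hx0
          exact absurd (Finset.mem_erase.mpr ⟨hx0, hx⟩) (by simp [hSe])
        rw [hS1, Finset.sum_singleton]
        have := hb0 i0
        linarith
      · obtain ⟨i1, hi1, hmin1⟩ := (S.erase i0).exists_min_image ℓ hSe
        have hi1S : i1 ∈ S := Finset.mem_of_mem_erase hi1
        have hi1M : i1 ∈ M := hS hi1S
        have hi0M : i0 ∈ M := hS hi0
        have hcard' : (S.erase i0).card ≤ n := by
          have := Finset.card_erase_of_mem hi0
          omega
        have hrec := ih (S.erase i0) hcard' ((Finset.erase_subset _ _).trans hS) i1 hi1 hmin1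
        have hsum : ∑ i ∈ S, (C - a i - b i)
            = (C - a i0 - b i0) + ∑ i ∈ S.erase i0, (C - a i - b i) :=
          (Finset.add_sum_erase S _ hi0).symm
        have hne : i1 ≠ i0 := (Finset.mem_erase.mp hi1).1
        have hll : (ℓ i0 : ℝ) ≤ (ℓ i1 : ℝ) := by exact_mod_cast hmin i1 hi1S
        have hcross : (r i1 : ℝ) ≤ b i0 := h5 i0 hi0M i1 hi1M hne hll
        have hr1 : C ≤ a i1 + (r i1 : ℝ) := h4 i1 hi1M
        rw [hsum]
        linarith
  obtain ⟨i0, hi0, hmin0⟩ := M.exists_min_image ℓ hMne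
  have hsum_le : ∑ i ∈ M, (C - a i - b i) ≤ C :=
    le_trans (key M.card M le_rfl Finset.Subset.rfl i0 hi0 hmin0) (by linarith [ha0 i0])
  have hcardM : M.card = N := by
    rw [hM, Nat.card_Icc]
    omega
  have hsum_gt : ∑ i ∈ M, (C/(N:ℝ)) < ∑ i ∈ M, (C - a i - b i) := by
    apply Finset.sum_lt_sum_of_nonempty hMne
    intro i hi
    have h := hbad i hi
    have heq : ((N:ℝ) - 1)/(N:ℝ) * C = C - C/(N:ℝ) := by
      field_simp
    linarith [hbad i hi]
  rw [Finset.sum_const, hcardM, nsmul_eq_mul] at hsum_gt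
  have : (N:ℝ) * (C/(N:ℝ)) = C := by
    field_simp
  linarith
end

section
/- Sum of leave-one-out FD capacities bound: For any ℓ, r : [1:N] → ℝ≥0, Σ_{i=1}^N C^FD([1:N]\{i}) ≥ (N−1)·C^FD([1:N]). -/
open Finset
open scoped NNReal

lemma CFD_le (ℓ r : ℕ → ℝ≥0) (M A : Finset ℕ) (hA : A ⊆ M) :
    CFD ℓ r M ≤ A.sup ℓ + (M \ A).sup r :=
  Finset.inf'_le _ (Finset.mem_powerset.mpr hA)

lemma CFD_exists (ℓ r : ℕ → ℝ≥0) (M : Finset ℕ) :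
    ∃ A ⊆ M, CFD ℓ r M = A.sup ℓ + (M \ A).sup r := by
  obtain ⟨A, hA, hEq⟩ := Finset.exists_mem_eq_inf' (Finset.powerset_nonempty M)
    (fun A => A.sup ℓ + (M \ A).sup r)
  exact ⟨A, Finset.mem_powerset.mp hA, hEq⟩

/-- Telescoping sum bound. -/
lemma telescope : ∀ (n : ℕ) (S : Finset ℕ) (f d : ℕ → ℝ), S.card ≤ n →
    (∀ i ∈ S, d i ≤ f i) →
    (∀ i ∈ S, ∀ j ∈ S, f j < f i → d i ≤ f i - f j) →
    (∀ i ∈ S, ∀ j ∈ S, i ≠ j → f i ≠ f j) →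
    ∀ L : ℝ, 0 ≤ L → (∀ i ∈ S, 0 ≤ f i ∧ f i ≤ L) → ∑ i ∈ S, d i ≤ L := by
  intro n
  induction n with
  | zero =>
    intro S f d hcard _ _ _ L hL _
    have : S = ∅ := Finset.card_eq_zero.mp (Nat.le_zero.mp hcard)
    simp [this, hL]
  | succ n ih =>
    intro S f d hcard hd hpair hinj L hL hbound
    rcases S.eq_empty_or_nonempty with rfl | hSne
    · simp [hL]
    obtain ⟨m, hm, hmax⟩ := S.exists_max_image f hSne
    have hsum : ∑ i ∈ S, d i = d m + ∑ i ∈ S.erase m, d i := by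
      rw [← Finset.add_sum_erase _ _ hm]
    rcases (S.erase m).eq_empty_or_nonempty with he | hene
    · rw [hsum, he]
      simp only [Finset.sum_empty, add_zero]
      exact le_trans (hd m hm) (hbound m hm).2
    · obtain ⟨m', hm', hmax'⟩ := (S.erase m).exists_max_image f hene
      have hm'S : m' ∈ S := Finset.mem_of_mem_erase hm'
      have hne : m' ≠ m := Finset.ne_of_mem_erase hm'
      have hlt : f m' < f m :=
        lt_of_le_of_ne (hmax m' hm'S) (hinj m' hm'S m hm hne)
      have h1 : d m ≤ f m - f m' := hpair m hm m' hm'S hlt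
      have h2 : ∑ i ∈ S.erase m, d i ≤ f m' := by
        refine ih (S.erase m) f d ?_ ?_ ?_ ?_ (f m') (hbound m' hm'S).1 ?_
        · have := Finset.card_erase_lt_of_mem hm
          omega
        · exact fun i hi => hd i (Finset.mem_of_mem_erase hi)
        · exact fun i hi j hj h =>
            hpair i (Finset.mem_of_mem_erase hi) j (Finset.mem_of_mem_erase hj) h
        · exact fun i hi j hj h =>
            hinj i (Finset.mem_of_mem_erase hi) j (Finset.mem_of_mem_erase hj) h
        · exact fun i hi =>
            ⟨(hbound i (Finset.mem_of_mem_erase hi)).1, hmax' i hi⟩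
      have : ∑ i ∈ S, d i ≤ f m := by
        rw [hsum]; linarith
      exact le_trans this (hbound m hm).2

/-- Sum of leave-one-out FD capacities bound:
`Σ_{i=1}^N C^FD([1:N]\{i}) ≥ (N−1)·C^FD([1:N])`. -/
theorem stmt_11 (N : ℕ) (hN : 2 ≤ N) (ℓ r : ℕ → ℝ≥0) :
    ((N - 1 : ℕ) : ℝ≥0) * CFD ℓ r (Finset.Icc 1 N)
      ≤ ∑ i ∈ Finset.Icc 1 N, CFD ℓ r (Finset.Icc 1 N \ {i}) := by
  set M := Finset.Icc 1 N with hMdef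
  set C := CFD ℓ r M with hCdef
  set Ci : ℕ → ℝ≥0 := fun i => CFD ℓ r (M \ {i}) with hCidef
  -- optimal cut of M
  obtain ⟨A, hAM, hAeq⟩ := CFD_exists ℓ r M
  set L := A.sup ℓ with hLdef
  set R := (M \ A).sup r with hRdef
  -- Step 1: Ci i ≤ C
  have hle : ∀ i ∈ M, Ci i ≤ C := by
    intro i hi
    have hsub : A \ {i} ⊆ M \ {i} := Finset.sdiff_subset_sdiff hAM (le_refl _)
    have h1 : Ci i ≤ (A \ {i}).sup ℓ + ((M \ {i}) \ (A \ {i})).sup r :=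
      CFD_le ℓ r _ _ hsub
    have h2 : (A \ {i}).sup ℓ ≤ L := Finset.sup_mono Finset.sdiff_subset
    have h3 : ((M \ {i}) \ (A \ {i})).sup r ≤ R := by
      apply Finset.sup_mono
      intro j hj
      simp only [Finset.mem_sdiff, Finset.mem_singleton] at hj ⊢
      tauto
    calc Ci i ≤ (A \ {i}).sup ℓ + ((M \ {i}) \ (A \ {i})).sup r := h1
      _ ≤ L + R := add_le_add h2 h3
      _ = C := hAeq.symm
  -- Step 2+3: facts about bad indices
  have facts : ∀ i ∈ M, Ci i < C →
      ((C : ℝ) - Ci i ≤ ℓ i ∧ (C : ℝ) - Ci i ≤ r i ∧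
        ∀ j ∈ M, j ≠ i →
          ((ℓ j < ℓ i ∧ (C : ℝ) - Ci i ≤ (ℓ i : ℝ) - ℓ j) ∨
           (r j < r i ∧ (C : ℝ) - Ci i ≤ (r i : ℝ) - r j))) := by
    intro i hi hbad
    obtain ⟨B, hBsub, hBeq⟩ := CFD_exists ℓ r (M \ {i})
    have hBeq' : Ci i = B.sup ℓ + ((M \ {i}) \ B).sup r := hBeq
    have hiB : i ∉ B := fun h => (Finset.mem_sdiff.mp (hBsub h)).2 (Finset.mem_singleton_self i)
    -- cut insert i B in M
    have hsub1 : insert i B ⊆ M := by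
      intro j hj
      rcases Finset.mem_insert.mp hj with rfl | hj
      · exact hi
      · exact (Finset.mem_sdiff.mp (hBsub hj)).1
    have hM1 : M \ insert i B = (M \ {i}) \ B := by
      ext j
      simp only [Finset.mem_sdiff, Finset.mem_insert, Finset.mem_singleton]
      tauto
    have hcut1 : C ≤ (ℓ i ⊔ B.sup ℓ) + ((M \ {i}) \ B).sup r := by
      have := CFD_le ℓ r M (insert i B) hsub1
      rwa [Finset.sup_insert, hM1] at this
    -- cut B in M
    have hsub2 : B ⊆ M := fun j hj => (Finset.mem_sdiff.mp (hBsub hj)).1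
    have hM2 : M \ B = insert i ((M \ {i}) \ B) := by
      ext j
      simp only [Finset.mem_sdiff, Finset.mem_insert, Finset.mem_singleton]
      constructor
      · rintro ⟨hjM, hjB⟩
        by_cases h : j = i
        · left; exact h
        · right; exact ⟨⟨hjM, h⟩, hjB⟩
      · rintro (rfl | ⟨⟨hjM, _⟩, hjB⟩)
        · exact ⟨hi, hiB⟩
        · exact ⟨hjM, hjB⟩
    have hcut2 : C ≤ B.sup ℓ + (r i ⊔ ((M \ {i}) \ B).sup r) := by
      have := CFD_le ℓ r M B hsub2
      rwa [hM2, Finset.sup_insert] at this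
    -- strictness
    have hℓi : B.sup ℓ < ℓ i := by
      by_contra h
      push_neg at h
      rw [sup_eq_right.mpr h, ← hBeq] at hcut1
      exact absurd hcut1 (not_le.mpr hbad)
    have hri : ((M \ {i}) \ B).sup r < r i := by
      by_contra h
      push_neg at h
      rw [sup_eq_right.mpr h, ← hBeq] at hcut2
      exact absurd hcut2 (not_le.mpr hbad)
    have hcut1' : C ≤ ℓ i + ((M \ {i}) \ B).sup r := by
      rwa [sup_eq_left.mpr hℓi.le] at hcut1
    have hcut2' : C ≤ B.sup ℓ + r i := by
      rwa [sup_eq_left.mpr hri.le] at hcut2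
    -- real versions
    have hCi : (Ci i : ℝ) = ((B.sup ℓ : ℝ≥0) : ℝ) + ((((M \ {i}) \ B).sup r : ℝ≥0) : ℝ) := by
      rw [hBeq']; push_cast; ring
    have hc1 : (C : ℝ) ≤ (ℓ i : ℝ) + ((((M \ {i}) \ B).sup r : ℝ≥0) : ℝ) := by
      have := NNReal.coe_le_coe.mpr hcut1'; push_cast at this; linarith
    have hc2 : (C : ℝ) ≤ ((B.sup ℓ : ℝ≥0) : ℝ) + (r i : ℝ) := by
      have := NNReal.coe_le_coe.mpr hcut2'; push_cast at this; linarith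
    have hsupℓ0 : (0 : ℝ) ≤ ((B.sup ℓ : ℝ≥0) : ℝ) := (B.sup ℓ).2
    have hsupr0 : (0 : ℝ) ≤ ((((M \ {i}) \ B).sup r : ℝ≥0) : ℝ) := (((M \ {i}) \ B).sup r).2
    refine ⟨by linarith, by linarith, ?_⟩
    intro j hjM hji
    have hjMi : j ∈ M \ {i} := Finset.mem_sdiff.mpr ⟨hjM, by simpa using hji⟩
    by_cases hjB : j ∈ B
    · left
      have hℓj : ℓ j ≤ B.sup ℓ := Finset.le_sup hjB
      have hℓj' : (ℓ j : ℝ) ≤ ((B.sup ℓ : ℝ≥0) : ℝ) := NNReal.coe_le_coe.mpr hℓj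
      exact ⟨lt_of_le_of_lt hℓj hℓi, by linarith⟩
    · right
      have hjr : r j ≤ ((M \ {i}) \ B).sup r :=
        Finset.le_sup (Finset.mem_sdiff.mpr ⟨hjMi, hjB⟩)
      have hjr' : (r j : ℝ) ≤ ((((M \ {i}) \ B).sup r : ℝ≥0) : ℝ) := NNReal.coe_le_coe.mpr hjr
      exact ⟨lt_of_le_of_lt hjr hri, by linarith⟩
  -- deficits
  set d : ℕ → ℝ := fun i => (C : ℝ) - (Ci i : ℝ) with hddef
  set Bad : Finset ℕ := M.filter (fun i => Ci i < C) with hBaddef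
  have hBadM : Bad ⊆ M := Finset.filter_subset _ _
  -- dichotomy needed for telescope hypotheses
  have hbadmem : ∀ i ∈ Bad, i ∈ M ∧ Ci i < C := by
    intro i hi; exact ⟨hBadM hi, (Finset.mem_filter.mp hi).2⟩
  have hstep : ∀ i ∈ Bad, ∀ j ∈ Bad, j ≠ i →
      ((ℓ j < ℓ i ∧ d i ≤ (ℓ i : ℝ) - ℓ j) ∨
       (r j < r i ∧ d i ≤ (r i : ℝ) - r j)) := by
    intro i hi j hj hji
    obtain ⟨hiM, hibad⟩ := hbadmem i hi
    obtain ⟨hjM, _⟩ := hbadmem j hj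
    exact (facts i hiM hibad).2.2 j hjM hji
  -- key pair consequences for bad i j
  have hLpair : ∀ i ∈ Bad, ∀ j ∈ Bad, (ℓ j : ℝ) < (ℓ i : ℝ) → d i ≤ (ℓ i : ℝ) - ℓ j := by
    intro i hi j hj hlt
    have hji : j ≠ i := by
      intro h; rw [h] at hlt; exact lt_irrefl _ hlt
    rcases hstep i hi j hj hji with ⟨_, h⟩ | ⟨hr1, _⟩
    · exact h
    · rcases hstep j hj i hi (Ne.symm hji) with ⟨hl2, _⟩ | ⟨hr2, _⟩
      · exact absurd (NNReal.coe_lt_coe.mpr hl2) (not_lt.mpr hlt.le)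
      · exact absurd hr2 (not_lt.mpr hr1.le)
  have hRpair : ∀ i ∈ Bad, ∀ j ∈ Bad, (r j : ℝ) < (r i : ℝ) → d i ≤ (r i : ℝ) - r j := by
    intro i hi j hj hlt
    have hji : j ≠ i := by
      intro h; rw [h] at hlt; exact lt_irrefl _ hlt
    rcases hstep i hi j hj hji with ⟨hl1, _⟩ | ⟨_, h⟩
    · rcases hstep j hj i hi (Ne.symm hji) with ⟨hl2, _⟩ | ⟨hr2, _⟩
      · exact absurd hl2 (not_lt.mpr hl1.le)
      · exact absurd (NNReal.coe_lt_coe.mpr hr2) (not_lt.mpr hlt.le)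
    · exact h
  have hℓinj : ∀ i ∈ Bad, ∀ j ∈ Bad, i ≠ j → (ℓ i : ℝ) ≠ (ℓ j : ℝ) := by
    intro i hi j hj hij heq
    rcases hstep i hi j hj (Ne.symm hij) with ⟨hl1, _⟩ | ⟨hr1, _⟩
    · exact absurd (NNReal.coe_lt_coe.mpr hl1) (by rw [heq]; exact lt_irrefl _)
    · rcases hstep j hj i hi hij with ⟨hl2, _⟩ | ⟨hr2, _⟩
      · exact absurd (NNReal.coe_lt_coe.mpr hl2) (by rw [heq]; exact lt_irrefl _)
      · exact absurd hr2 (not_lt.mpr hr1.le)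
  have hrinj : ∀ i ∈ Bad, ∀ j ∈ Bad, i ≠ j → (r i : ℝ) ≠ (r j : ℝ) := by
    intro i hi j hj hij heq
    rcases hstep i hi j hj (Ne.symm hij) with ⟨hl1, _⟩ | ⟨hr1, _⟩
    · rcases hstep j hj i hi hij with ⟨hl2, _⟩ | ⟨hr2, _⟩
      · exact absurd hl2 (not_lt.mpr hl1.le)
      · exact absurd (NNReal.coe_lt_coe.mpr hr2) (by rw [heq]; exact lt_irrefl _)
    · exact absurd (NNReal.coe_lt_coe.mpr hr1) (by rw [heq]; exact lt_irrefl _)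
  have hdle : ∀ i ∈ Bad, d i ≤ (ℓ i : ℝ) ∧ d i ≤ (r i : ℝ) := by
    intro i hi
    obtain ⟨hiM, hibad⟩ := hbadmem i hi
    exact ⟨(facts i hiM hibad).1, (facts i hiM hibad).2.1⟩
  -- split Bad by membership in A
  have hSsum : ∑ i ∈ Bad.filter (· ∈ A), d i ≤ (L : ℝ) := by
    apply telescope (Bad.filter (· ∈ A)).card _ _ _ le_rfl
    · exact fun i hi => (hdle i (Finset.mem_of_mem_filter i hi)).1
    · exact fun i hi j hj h =>
        hLpair i (Finset.mem_of_mem_filter i hi) j (Finset.mem_of_mem_filter j hj) h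
    · exact fun i hi j hj h =>
        hℓinj i (Finset.mem_of_mem_filter i hi) j (Finset.mem_of_mem_filter j hj) h
    · exact L.2
    · intro i hi
      refine ⟨(ℓ i).2, ?_⟩
      exact NNReal.coe_le_coe.mpr (Finset.le_sup (Finset.mem_filter.mp hi).2)
  have hTsum : ∑ i ∈ Bad.filter (¬ · ∈ A), d i ≤ (R : ℝ) := by
    apply telescope (Bad.filter (¬ · ∈ A)).card _ _ _ le_rfl
    · exact fun i hi => (hdle i (Finset.mem_of_mem_filter i hi)).2
    · exact fun i hi j hj h =>
        hRpair i (Finset.mem_of_mem_filter i hi) j (Finset.mem_of_mem_filter j hj) h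
    · exact fun i hi j hj h =>
        hrinj i (Finset.mem_of_mem_filter i hi) j (Finset.mem_of_mem_filter j hj) h
    · exact R.2
    · intro i hi
      refine ⟨(r i).2, ?_⟩
      have hiM : i ∈ M := hBadM (Finset.mem_of_mem_filter i hi)
      have hiA : i ∉ A := (Finset.mem_filter.mp hi).2
      exact NNReal.coe_le_coe.mpr (Finset.le_sup (Finset.mem_sdiff.mpr ⟨hiM, hiA⟩))
  have hBadsum : ∑ i ∈ Bad, d i ≤ (C : ℝ) := by
    have hsplit : ∑ i ∈ Bad.filter (· ∈ A), d i + ∑ i ∈ Bad.filter (¬ · ∈ A), d i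
        = ∑ i ∈ Bad, d i := Finset.sum_filter_add_sum_filter_not _ _ _
    have hCLR : (C : ℝ) = (L : ℝ) + (R : ℝ) := by
      rw [hCdef, hAeq]; push_cast; ring
    linarith
  -- sum over M equals sum over Bad
  have hMsum : ∑ i ∈ M, d i = ∑ i ∈ Bad, d i := by
    symm
    apply Finset.sum_subset hBadM
    intro i hiM hiBad
    have : ¬ Ci i < C := by
      intro h
      exact hiBad (Finset.mem_filter.mpr ⟨hiM, h⟩)
    have : Ci i = C := le_antisymm (hle i hiM) (not_lt.mp this)
    simp [hddef, this]
  -- conclude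
  have hcardM : M.card = N := by
    rw [hMdef, Nat.card_Icc]; omega
  have hsumM : ∑ i ∈ M, d i = N * (C : ℝ) - ∑ i ∈ M, (Ci i : ℝ) := by
    rw [hddef]
    rw [Finset.sum_sub_distrib, Finset.sum_const, hcardM, nsmul_eq_mul]
  have := hBadsum
  rw [← hMsum] at this
  rw [hsumM] at this
  have hfin : ((N : ℝ) - 1) * (C : ℝ) ≤ ∑ i ∈ M, (Ci i : ℝ) := by linarith
  rw [← NNReal.coe_le_coe]
  have h1 : (((N - 1 : ℕ) : ℝ≥0) : ℝ) = (N : ℝ) - 1 := by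
    rw [NNReal.coe_natCast, Nat.cast_sub (by omega : 1 ≤ N)]
    norm_num
  rw [NNReal.coe_mul, h1, NNReal.coe_sum]
  exact hfin
end

section
/- Worst-relay removal guarantee (abstract form): Let C : Set [1:N] → ℝ≥0 be a set function satisfying, for all nonempty K ⊆ [1:N], C([1:N]) ≤ C(K) + C([1:N]\K), and monotone: K ⊆ K' implies C(K) ≤ C(K'). If relay N satisfies C({N}) ≤ C({j}) for all j ∈ [1:N], then C([1:N−1]) ≥ (1/2)·C([1:N]). -/
open Finset
open scoped NNReal

/-- Worst-relay removal guarantee (abstract form): if the nonnegative set function `C`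
on subsets of `[1:N]` is monotone, satisfies the partition subadditivity
`C([1:N]) ≤ C(K) + C([1:N]\K)` for all nonempty `K ⊆ [1:N]`, and relay `N` has the
smallest singleton value, then `C([1:N−1]) ≥ (1/2)·C([1:N])`. -/
theorem stmt_12 (N : ℕ) (hN : 2 ≤ N) (C : Finset ℕ → ℝ≥0)
    (hmono : ∀ K K' : Finset ℕ, K ⊆ K' → K' ⊆ Finset.Icc 1 N → C K ≤ C K')
    (hsub : ∀ K : Finset ℕ, K ⊆ Finset.Icc 1 N → K.Nonempty →
      C (Finset.Icc 1 N) ≤ C K + C (Finset.Icc 1 N \ K))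
    (hworst : ∀ j ∈ Finset.Icc 1 N, C {N} ≤ C {j}) :
    C (Finset.Icc 1 N) / 2 ≤ C (Finset.Icc 1 (N - 1)) := by
  have hset : Finset.Icc 1 N \ {N} = Finset.Icc 1 (N - 1) := by
    ext a; simp only [mem_sdiff, mem_Icc, mem_singleton]; omega
  have h1 := hsub {N} (by simp; omega) ⟨N, mem_singleton_self N⟩
  rw [hset] at h1
  have h2 : C {N} ≤ C (Finset.Icc 1 (N - 1)) := by
    calc C {N} ≤ C {1} := hworst 1 (by simp; omega)
    _ ≤ C (Finset.Icc 1 (N - 1)) := by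
        apply hmono
        · simp; omega
        · intro a ha; simp at ha ⊢; omega
  have : C (Finset.Icc 1 N) ≤ C (Finset.Icc 1 (N - 1)) * 2 := by
    calc C (Finset.Icc 1 N) ≤ C {N} + C (Finset.Icc 1 (N - 1)) := h1
    _ ≤ C (Finset.Icc 1 (N - 1)) + C (Finset.Icc 1 (N - 1)) := by
        exact add_le_add h2 le_rfl
    _ = C (Finset.Icc 1 (N - 1)) * 2 := by ring
  rw [div_le_iff₀ (by norm_num)]
  exact this
end

section
/- Iterated worst-relay removal: Under the same abstract assumptions (nonnegativity, monotonicity, and the partition subadditivity C(M) ≤ C(K) + C(M\K) for K ⊆ M applied to every subnetwork), if relays are ordered so that C({1}) ≥ C({2}) ≥ … ≥ C({N}), then for every k ∈ [1:N], C([1:k]) ≥ 2^{−(N−k)}·C([1:N]). -/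
open Finset
open scoped NNReal

/-- Iterated worst-relay removal: if the nonnegative set function `C` on subsets of
`[1:N]` is monotone, satisfies `C(M) ≤ C(M\{m}) + C({m})` for each `M ⊆ [1:N]` and
`m ∈ M`, and singleton values are sorted nonincreasingly, then for every `k ∈ [1:N]`,
`C([1:k]) ≥ 2^{−(N−k)}·C([1:N])`. -/
theorem stmt_13 (N : ℕ) (hN : 1 ≤ N) (C : Finset ℕ → ℝ≥0)
    (hmono : ∀ K K' : Finset ℕ, K ⊆ K' → K' ⊆ Finset.Icc 1 N → C K ≤ C K')
    (hsub : ∀ M : Finset ℕ, M ⊆ Finset.Icc 1 N → ∀ m ∈ M, C M ≤ C (M \ {m}) + C {m})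
    (hsorted : ∀ i ∈ Finset.Icc 1 N, ∀ j ∈ Finset.Icc 1 N, i ≤ j → C {j} ≤ C {i}) :
    ∀ k ∈ Finset.Icc 1 N,
      C (Finset.Icc 1 N) ≤ 2 ^ (N - k) * C (Finset.Icc 1 k) := by
  intro k hk
  obtain ⟨hk1, hkN⟩ := Finset.mem_Icc.mp hk
  suffices h : ∀ j, k ≤ j → j ≤ N → C (Finset.Icc 1 j) ≤ 2 ^ (j - k) * C (Finset.Icc 1 k) from
    h N hkN le_rfl
  intro j
  induction j with
  | zero => intro h0 _; omega
  | succ j ih =>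
    intro hkj hjN
    rcases eq_or_lt_of_le hkj with heq | hlt
    · rw [← heq]
      simp
    · have hkj' : k ≤ j := by omega
      have hj1 : 1 ≤ j := le_trans hk1 hkj'
      have hjN' : j ≤ N := by omega
      have hdiff : Finset.Icc 1 (j + 1) \ {j + 1} = Finset.Icc 1 j := by
        ext x; simp only [Finset.mem_sdiff, Finset.mem_Icc, Finset.mem_singleton]; omega
      have hsubIcc : Finset.Icc 1 (j + 1) ⊆ Finset.Icc 1 N :=
        Finset.Icc_subset_Icc le_rfl (by omega)
      have hmem : j + 1 ∈ Finset.Icc 1 (j + 1) := Finset.mem_Icc.mpr ⟨by omega, le_rfl⟩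
      have hstep := hsub (Finset.Icc 1 (j + 1)) hsubIcc (j + 1) hmem
      rw [hdiff] at hstep
      have hsing : C {j + 1} ≤ C {j} :=
        hsorted j (Finset.mem_Icc.mpr ⟨hj1, hjN'⟩) (j + 1)
          (Finset.mem_Icc.mpr ⟨by omega, by omega⟩) (by omega)
      have hmono' : C {j} ≤ C (Finset.Icc 1 j) := by
        apply hmono _ _ (by simp [Finset.singleton_subset_iff, Finset.mem_Icc, hj1])
        exact Finset.Icc_subset_Icc le_rfl hjN'
      have h2 : C (Finset.Icc 1 (j + 1)) ≤ 2 * C (Finset.Icc 1 j) := by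
        calc C (Finset.Icc 1 (j + 1)) ≤ C (Finset.Icc 1 j) + C {j + 1} := hstep
          _ ≤ C (Finset.Icc 1 j) + C (Finset.Icc 1 j) :=
            add_le_add_right (le_trans hsing hmono') _
          _ = 2 * C (Finset.Icc 1 j) := (two_mul _).symm
      have := ih hkj' hjN'
      calc C (Finset.Icc 1 (j + 1)) ≤ 2 * C (Finset.Icc 1 j) := h2
        _ ≤ 2 * (2 ^ (j - k) * C (Finset.Icc 1 k)) := by
            exact mul_le_mul_right this 2
        _ = 2 ^ (j + 1 - k) * C (Finset.Icc 1 k) := by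
            rw [← mul_assoc]
            congr 1
            rw [show j + 1 - k = (j - k) + 1 by omega, pow_succ]
            ring
end

section
/- HD rate comparison under a fixed schedule (weighted cut-combining): Let S be a finite index set of states, λ : S → ℝ≥0 with Σ_s λ_s = 1, and for each state s ∈ S let ℓ'_{i,s}, r'_{i,s} ≥ 0 for i ∈ [1:N]. Define R(M) = min_{A ⊆ M} Σ_{s∈S} λ_s (max_{i∈A} ℓ'_{i,s} + max_{i∈M\A} r'_{i,s}). Then Σ_{i=1}^N R([1:N]\{i}) ≥ (N−1)·R([1:N]). -/
open Finset
open scoped NNReal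

/-- Approximate HD achievable rate of the diamond subnetwork with relay set `M` under
the fixed schedule `w` on the finite state set `S`:
`R(M) = min_{A ⊆ M} Σ_{s∈S} w_s (max_{i∈A} ℓ'_{i,s} + max_{i∈M\A} r'_{i,s})`,
with `max ∅ = 0`. -/
noncomputable def Rrate {σ : Type*} (S : Finset σ) (w : σ → ℝ≥0)
    (ℓ r : σ → ℕ → ℝ≥0) (M : Finset ℕ) : ℝ≥0 :=
  M.powerset.inf' (Finset.powerset_nonempty M) fun A =>
    ∑ s ∈ S, w s * (A.sup (ℓ s) + (M \ A).sup (r s))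


lemma levelsum_le {α : Type*} [DecidableEq α] (f : ℕ → ℝ≥0) (U : Finset ℕ) (K : ℕ)
    (A : α → Finset ℕ) (I : Finset α) :
    ∑ k ∈ Finset.range K,
        (U.filter fun x => k + 1 ≤ (I.filter fun i => x ∈ A i).card).sup f
      ≤ ∑ i ∈ I, (A i).sup f := by
  classical
  induction I using Finset.strongInduction with
  | _ I ih =>
    by_cases h1 : (U.filter fun x => 1 ≤ (I.filter fun i => x ∈ A i).card).Nonempty
    · obtain ⟨x, hx, hfx⟩ := Finset.exists_mem_eq_sup _ h1 f
      obtain ⟨hxU, hxc⟩ := Finset.mem_filter.mp hx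
      have hex : ∃ j ∈ I, x ∈ A j := by
        obtain ⟨j, hj⟩ := Finset.card_pos.mp hxc
        exact ⟨j, (Finset.mem_filter.mp hj).1, (Finset.mem_filter.mp hj).2⟩
      obtain ⟨j, hjI, hxAj⟩ := hex
      have hsub : I.erase j ⊂ I := Finset.erase_ssubset hjI
      have hcount : ∀ x', ((I.filter fun i => x' ∈ A i).card)
          ≤ ((I.erase j).filter fun i => x' ∈ A i).card + 1 := by
        intro x'
        have : (I.filter fun i => x' ∈ A i) ⊆
            insert j ((I.erase j).filter fun i => x' ∈ A i) := by
          intro i hi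
          obtain ⟨hiI, hiA⟩ := Finset.mem_filter.mp hi
          by_cases hij : i = j
          · simp [hij]
          · exact Finset.mem_insert_of_mem (Finset.mem_filter.mpr
              ⟨Finset.mem_erase.mpr ⟨hij, hiI⟩, hiA⟩)
        calc (I.filter fun i => x' ∈ A i).card
            ≤ (insert j ((I.erase j).filter fun i => x' ∈ A i)).card :=
              Finset.card_le_card this
          _ ≤ ((I.erase j).filter fun i => x' ∈ A i).card + 1 :=
              Finset.card_insert_le _ _
      cases K with
      | zero => simp
      | succ n =>
        have step1 : ∑ k ∈ Finset.range (n+1),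
            (U.filter fun x => k + 1 ≤ (I.filter fun i => x ∈ A i).card).sup f
            = (∑ k ∈ Finset.range n,
                (U.filter fun x => k + 2 ≤ (I.filter fun i => x ∈ A i).card).sup f)
              + (U.filter fun x => 1 ≤ (I.filter fun i => x ∈ A i).card).sup f := by
          rw [Finset.sum_range_succ']
        have step2 : ∀ k, (U.filter fun x => k + 2 ≤ (I.filter fun i => x ∈ A i).card).sup f
            ≤ (U.filter fun x => k + 1 ≤ ((I.erase j).filter fun i => x ∈ A i).card).sup f := by
          intro k
          apply Finset.sup_mono
          intro x' hx'
          obtain ⟨h1', h2'⟩ := Finset.mem_filter.mp hx'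
          exact Finset.mem_filter.mpr ⟨h1', by have := hcount x'; omega⟩
        calc ∑ k ∈ Finset.range (n+1),
            (U.filter fun x => k + 1 ≤ (I.filter fun i => x ∈ A i).card).sup f
            = _ := step1
          _ ≤ (∑ k ∈ Finset.range n,
                (U.filter fun x => k + 1 ≤ ((I.erase j).filter fun i => x ∈ A i).card).sup f)
              + (A j).sup f :=
              add_le_add (Finset.sum_le_sum fun k _ => step2 k)
                (by rw [hfx]; exact Finset.le_sup hxAj)
          _ ≤ (∑ k ∈ Finset.range (n+1),
                (U.filter fun x => k + 1 ≤ ((I.erase j).filter fun i => x ∈ A i).card).sup f)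
              + (A j).sup f := by
              refine add_le_add_left ?_ _
              apply Finset.sum_le_sum_of_subset
              exact Finset.range_subset_range.mpr (Nat.le_succ n)
          _ ≤ (∑ i ∈ I.erase j, (A i).sup f) + (A j).sup f :=
              add_le_add_left (ih _ hsub) _
          _ = ∑ i ∈ I, (A i).sup f := by
              exact Finset.sum_erase_add _ _ hjI
    · have : ∀ k ∈ Finset.range K,
          (U.filter fun x => k + 1 ≤ (I.filter fun i => x ∈ A i).card).sup f = 0 := by
        intro k _
        have : (U.filter fun x => k + 1 ≤ (I.filter fun i => x ∈ A i).card) = ∅ := by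
          rw [Finset.not_nonempty_iff_eq_empty] at h1
          apply Finset.eq_empty_of_forall_notMem
          intro x hx
          obtain ⟨hxU, hxc⟩ := Finset.mem_filter.mp hx
          exact Finset.notMem_empty x (h1 ▸ Finset.mem_filter.mpr ⟨hxU, by omega⟩)
        rw [this]; simp
      rw [Finset.sum_congr rfl this]
      simp

/-- HD rate comparison under a fixed schedule (weighted cut-combining, Lemma 6):
`Σ_{i=1}^N R([1:N]\{i}) ≥ (N−1)·R([1:N])`. -/
theorem stmt_14 {σ : Type*} (S : Finset σ) (w : σ → ℝ≥0)
    (hw : ∑ s ∈ S, w s = 1) (N : ℕ) (hN : 2 ≤ N) (ℓ r : σ → ℕ → ℝ≥0) :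
    ((N - 1 : ℕ) : ℝ≥0) * Rrate S w ℓ r (Finset.Icc 1 N)
      ≤ ∑ i ∈ Finset.Icc 1 N, Rrate S w ℓ r (Finset.Icc 1 N \ {i}) := by
  classical
  set M : Finset ℕ := Finset.Icc 1 N with hM
  have hmin : ∀ i : ℕ, ∃ A ∈ (M \ {i}).powerset,
      Rrate S w ℓ r (M \ {i})
        = ∑ s ∈ S, w s * (A.sup (ℓ s) + ((M \ {i}) \ A).sup (r s)) := by
    intro i
    exact Finset.exists_mem_eq_inf' (Finset.powerset_nonempty _) _
  choose Af hAf hRf using hmin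
  have hAsub : ∀ i, Af i ⊆ M \ {i} := fun i => Finset.mem_powerset.mp (hAf i)
  set C : ℕ → Finset ℕ := fun i => (M \ {i}) \ Af i with hC
  set a : ℕ → ℕ := fun x => ((M.filter fun i => x ∈ Af i)).card with ha
  set c : ℕ → ℕ := fun x => ((M.filter fun i => x ∈ C i)).card with hc
  set nn : ℕ := N - 1 with hnn
  have hcardM : M.card = N := by
    rw [hM, Nat.card_Icc]; omega
  have hac : ∀ x ∈ M, a x + c x = nn := by
    intro x hxM
    have hunion : (M.filter fun i => x ∈ Af i) ∪ (M.filter fun i => x ∈ C i)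
        = M.erase x := by
      ext i
      simp only [Finset.mem_union, Finset.mem_filter, Finset.mem_erase]
      constructor
      · rintro (⟨hiM, hx⟩ | ⟨hiM, hx⟩)
        · have hx' : x ∈ M \ {i} := hAsub i hx
          have : x ≠ i := by
            have := (Finset.mem_sdiff.mp hx').2
            simpa using this
          exact ⟨this.symm, hiM⟩
        · have hx' : x ∈ M \ {i} := (Finset.mem_sdiff.mp hx).1
          have : x ≠ i := by
            have := (Finset.mem_sdiff.mp hx').2
            simpa using this
          exact ⟨this.symm, hiM⟩
      · rintro ⟨hne, hiM⟩
        have hx' : x ∈ M \ {i} := Finset.mem_sdiff.mpr ⟨hxM, by simpa using hne.symm⟩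
        by_cases hxA : x ∈ Af i
        · exact Or.inl ⟨hiM, hxA⟩
        · exact Or.inr ⟨hiM, Finset.mem_sdiff.mpr ⟨hx', hxA⟩⟩
    have hdisj : Disjoint (M.filter fun i => x ∈ Af i) (M.filter fun i => x ∈ C i) := by
      rw [Finset.disjoint_left]
      intro i h1 h2
      have hx1 : x ∈ Af i := (Finset.mem_filter.mp h1).2
      have hx2 : x ∈ C i := (Finset.mem_filter.mp h2).2
      exact (Finset.mem_sdiff.mp hx2).2 hx1
    have hcu := Finset.card_union_of_disjoint hdisj
    rw [hunion, Finset.card_erase_of_mem hxM, hcardM] at hcu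
    simp only [ha, hc, hnn]
    omega
  have key : ∀ s ∈ S,
      (∑ k ∈ Finset.range nn, ((M.filter fun x => k + 1 ≤ a x).sup (ℓ s)
          + (M \ (M.filter fun x => k + 1 ≤ a x)).sup (r s)))
        ≤ ∑ i ∈ M, ((Af i).sup (ℓ s) + (C i).sup (r s)) := by
    intro s _
    rw [Finset.sum_add_distrib, Finset.sum_add_distrib]
    refine add_le_add ?_ ?_
    · exact levelsum_le (ℓ s) M nn Af M
    · have hrw : ∀ k ∈ Finset.range nn,
          (M \ (M.filter fun x => k + 1 ≤ a x)).sup (r s)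
            = (M.filter fun x => (nn - 1 - k) + 1 ≤ c x).sup (r s) := by
        intro k hk
        rw [Finset.mem_range] at hk
        congr 1
        rw [← Finset.filter_not]
        apply Finset.filter_congr
        intro x hxM
        have := hac x hxM
        simp only [not_le]
        omega
      rw [Finset.sum_congr rfl hrw,
        Finset.sum_range_reflect (fun k => (M.filter fun x => k + 1 ≤ c x).sup (r s)) nn]
      exact levelsum_le (r s) M nn C M
  calc ((N - 1 : ℕ) : ℝ≥0) * Rrate S w ℓ r M
      = ∑ _k ∈ Finset.range nn, Rrate S w ℓ r M := by
        rw [Finset.sum_const, Finset.card_range, nsmul_eq_mul, hnn]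
    _ ≤ ∑ k ∈ Finset.range nn, ∑ s ∈ S,
          w s * ((M.filter fun x => k + 1 ≤ a x).sup (ℓ s)
            + (M \ (M.filter fun x => k + 1 ≤ a x)).sup (r s)) := by
        refine Finset.sum_le_sum fun k _ => ?_
        unfold Rrate
        exact Finset.inf'_le _ (Finset.mem_powerset.mpr (Finset.filter_subset _ _))
    _ = ∑ s ∈ S, w s * ∑ k ∈ Finset.range nn,
          ((M.filter fun x => k + 1 ≤ a x).sup (ℓ s)
            + (M \ (M.filter fun x => k + 1 ≤ a x)).sup (r s)) := by
        rw [Finset.sum_comm]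
        exact Finset.sum_congr rfl fun s _ => (Finset.mul_sum _ _ _).symm
    _ ≤ ∑ s ∈ S, w s * ∑ i ∈ M, ((Af i).sup (ℓ s) + (C i).sup (r s)) :=
        Finset.sum_le_sum fun s hs => mul_le_mul_right (key s hs) _
    _ = ∑ i ∈ M, ∑ s ∈ S, w s * ((Af i).sup (ℓ s) + (C i).sup (r s)) := by
        rw [Finset.sum_comm]
        exact Finset.sum_congr rfl fun s _ => Finset.mul_sum _ _ _
    _ = ∑ i ∈ M, Rrate S w ℓ r (M \ {i}) :=
        Finset.sum_congr rfl fun i _ => (hRf i).symm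
end

section
/- Best leave-one-out HD subnetwork guarantee: With R(M) as above (weighted min-cut under a fixed schedule λ), there exists i ∈ [1:N] such that R([1:N]\{i}) ≥ ((N−1)/N)·R([1:N]). -/
open Finset
open scoped NNReal

lemma lemA (f : ℕ → ℝ≥0) (X : Finset ℕ) (B : ℕ → Finset ℕ) (I : Finset ℕ) :
    ∑ k ∈ Finset.Icc 1 I.card,
        (X.filter fun x => k ≤ (I.filter fun i => x ∈ B i).card).sup f
      ≤ ∑ i ∈ I, (B i).sup f := by
  induction I using Finset.strongInduction with
  | _ I ih =>
    rcases I.eq_empty_or_nonempty with rfl | hne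
    · simp
    obtain ⟨i, hiI, hmax⟩ := Finset.exists_max_image I (fun j => (B j).sup f) hne
    have hcard : I.card = (I.erase i).card + 1 := (Finset.card_erase_add_one hiI).symm
    have hg1 : (X.filter fun x => 1 ≤ (I.filter fun j => x ∈ B j).card).sup f ≤ (B i).sup f := by
      apply Finset.sup_le
      intro x hx
      rw [Finset.mem_filter] at hx
      obtain ⟨j, hj⟩ := Finset.card_pos.1 hx.2
      rw [Finset.mem_filter] at hj
      exact le_trans (Finset.le_sup hj.2) (hmax j hj.1)
    have hterm : ∀ k : ℕ,
        (X.filter fun x => k + 2 ≤ (I.filter fun j => x ∈ B j).card).sup f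
          ≤ (X.filter fun x => k + 1 ≤ ((I.erase i).filter fun j => x ∈ B j).card).sup f := by
      intro k
      apply Finset.sup_mono
      apply Finset.monotone_filter_right
      intro x hx
      have : ((I.erase i).filter fun j => x ∈ B j) = (I.filter fun j => x ∈ B j).erase i := by
        rw [Finset.filter_erase]
      rw [this]
      have := Finset.pred_card_le_card_erase (s := I.filter fun j => x ∈ B j) (a := i)
      omega
    -- rewrite LHS
    have hsplit : ∑ k ∈ Finset.Icc 1 I.card,
        (X.filter fun x => k ≤ (I.filter fun j => x ∈ B j).card).sup f
        = (∑ k ∈ Finset.range (I.erase i).card,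
            (X.filter fun x => k + 2 ≤ (I.filter fun j => x ∈ B j).card).sup f)
          + (X.filter fun x => 1 ≤ (I.filter fun j => x ∈ B j).card).sup f := by
      rw [hcard, ← Finset.Ico_add_one_right_eq_Icc, Finset.sum_Ico_eq_sum_range]
      have : (I.erase i).card + 1 + 1 - 1 = (I.erase i).card + 1 := by omega
      rw [this, Finset.sum_range_succ']
      congr 1
      · apply Finset.sum_congr rfl
        intro k _
        congr 1
        ext x
        simp only [Finset.mem_filter]
        constructor <;> (rintro ⟨h1, h2⟩; exact ⟨h1, by omega⟩)
    have hIH := ih (I.erase i) (Finset.erase_ssubset hiI)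
    have hback : ∑ k ∈ Finset.range (I.erase i).card,
        (X.filter fun x => k + 1 ≤ ((I.erase i).filter fun j => x ∈ B j).card).sup f
        = ∑ k ∈ Finset.Icc 1 (I.erase i).card,
            (X.filter fun x => k ≤ ((I.erase i).filter fun j => x ∈ B j).card).sup f := by
      rw [← Finset.Ico_add_one_right_eq_Icc, Finset.sum_Ico_eq_sum_range]
      have : (I.erase i).card + 1 - 1 = (I.erase i).card := by omega
      rw [this]
      apply Finset.sum_congr rfl
      intro k _
      congr 1
      ext x
      simp only [Finset.mem_filter]
      constructor <;> (rintro ⟨h1, h2⟩; exact ⟨h1, by omega⟩)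
    calc ∑ k ∈ Finset.Icc 1 I.card,
        (X.filter fun x => k ≤ (I.filter fun j => x ∈ B j).card).sup f
        = (∑ k ∈ Finset.range (I.erase i).card,
            (X.filter fun x => k + 2 ≤ (I.filter fun j => x ∈ B j).card).sup f)
          + (X.filter fun x => 1 ≤ (I.filter fun j => x ∈ B j).card).sup f := hsplit
      _ ≤ (∑ k ∈ Finset.range (I.erase i).card,
            (X.filter fun x => k + 1 ≤ ((I.erase i).filter fun j => x ∈ B j).card).sup f)
          + (B i).sup f := add_le_add (Finset.sum_le_sum fun k _ => hterm k) hg1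
      _ = (∑ k ∈ Finset.Icc 1 (I.erase i).card,
            (X.filter fun x => k ≤ ((I.erase i).filter fun j => x ∈ B j).card).sup f)
          + (B i).sup f := by rw [hback]
      _ ≤ (∑ j ∈ I.erase i, (B j).sup f) + (B i).sup f := add_le_add_left hIH _
      _ = ∑ j ∈ I, (B j).sup f := Finset.sum_erase_add I _ hiI

/-- Best leave-one-out HD subnetwork guarantee: there exists `i ∈ [1:N]` such that
`R([1:N]\{i}) ≥ ((N−1)/N)·R([1:N])`. -/
theorem stmt_15 {σ : Type*} (S : Finset σ) (w : σ → ℝ≥0)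
    (hw : ∑ s ∈ S, w s = 1) (N : ℕ) (hN : 2 ≤ N) (ℓ r : σ → ℕ → ℝ≥0) :
    ∃ i ∈ Finset.Icc 1 N,
      (((N - 1 : ℕ) : ℝ≥0) / (N : ℝ≥0)) * Rrate S w ℓ r (Finset.Icc 1 N)
        ≤ Rrate S w ℓ r (Finset.Icc 1 N \ {i}) := by
  classical
  set M := Finset.Icc 1 N with hM
  have hMne : M.Nonempty := ⟨1, by rw [hM, Finset.mem_Icc]; omega⟩
  have hMcard : M.card = N := by rw [hM, Nat.card_Icc]; omega
  -- choose minimizing cuts for each leave-one-out network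
  have hex : ∀ i : ℕ, ∃ A, A ⊆ M \ {i} ∧
      Rrate S w ℓ r (M \ {i})
        = ∑ s ∈ S, w s * (A.sup (ℓ s) + ((M \ {i}) \ A).sup (r s)) := by
    intro i
    obtain ⟨A, hA, hval⟩ := Finset.exists_mem_eq_inf' (Finset.powerset_nonempty (M \ {i}))
        (fun A => ∑ s ∈ S, w s * (A.sup (ℓ s) + ((M \ {i}) \ A).sup (r s)))
    exact ⟨A, Finset.mem_powerset.1 hA, hval⟩
  choose B hBsub hBval using hex
  set C : ℕ → Finset ℕ := fun i => (M \ {i}) \ B i with hC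
  -- counts
  have hcount : ∀ x ∈ M,
      (M.filter fun i => x ∈ B i).card + (M.filter fun i => x ∈ C i).card = N - 1 := by
    intro x hx
    have hdisj : Disjoint (M.filter fun i => x ∈ B i) (M.filter fun i => x ∈ C i) := by
      rw [Finset.disjoint_left]
      intro a haB haC
      rw [Finset.mem_filter] at haB haC
      have := haC.2
      rw [hC] at this
      simp only [Finset.mem_sdiff] at this
      exact this.2 haB.2
    have hunion : (M.filter fun i => x ∈ B i) ∪ (M.filter fun i => x ∈ C i)
        = M.erase x := by
      ext a
      simp only [Finset.mem_union, Finset.mem_filter, Finset.mem_erase]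
      constructor
      · rintro (⟨haM, hxB⟩ | ⟨haM, hxC⟩)
        · have := hBsub a hxB
          rw [Finset.mem_sdiff, Finset.mem_singleton] at this
          exact ⟨fun h => this.2 (h ▸ rfl), haM⟩
        · rw [hC] at hxC
          rw [Finset.mem_sdiff, Finset.mem_sdiff, Finset.mem_singleton] at hxC
          exact ⟨fun h => hxC.1.2 (h ▸ rfl), haM⟩
      · rintro ⟨hax, haM⟩
        have hxMa : x ∈ M \ {a} := by
          rw [Finset.mem_sdiff, Finset.mem_singleton]
          exact ⟨hx, fun h => hax h.symm⟩
        by_cases hxB : x ∈ B a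
        · exact Or.inl ⟨haM, hxB⟩
        · refine Or.inr ⟨haM, ?_⟩
          rw [hC, Finset.mem_sdiff]
          exact ⟨hxMa, hxB⟩
    have := Finset.card_union_of_disjoint hdisj
    rw [hunion, Finset.card_erase_of_mem hx, hMcard] at this
    omega
  set T : ℕ → Finset ℕ := fun k => M.filter fun x => k ≤ (M.filter fun i => x ∈ B i).card
    with hT
  set U : ℕ → Finset ℕ := fun k => M.filter fun x => k ≤ (M.filter fun i => x ∈ C i).card
    with hU
  have hTU : ∀ k ∈ Finset.Icc 1 (N - 1), M \ T k = U (N - k) := by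
    intro k hk
    rw [Finset.mem_Icc] at hk
    ext x
    rw [hT, hU]
    simp only [Finset.mem_sdiff, Finset.mem_filter, not_and, not_le]
    constructor
    · rintro ⟨hx, h2⟩
      have := hcount x hx
      exact ⟨hx, by have := h2 hx; omega⟩
    · rintro ⟨hx, h2⟩
      have := hcount x hx
      exact ⟨hx, fun _ => by omega⟩
  have hRk : ∀ k ∈ Finset.Icc 1 (N - 1),
      Rrate S w ℓ r M ≤ ∑ s ∈ S, w s * ((T k).sup (ℓ s) + (U (N - k)).sup (r s)) := by
    intro k hk
    have hTk : T k ∈ M.powerset := Finset.mem_powerset.2 (Finset.filter_subset _ _)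
    have h := Finset.inf'_le
        (fun A => ∑ s ∈ S, w s * (A.sup (ℓ s) + (M \ A).sup (r s))) hTk
    rw [Rrate, ← hTU k hk]
    exact h
  -- key sum inequality
  have key : ((N - 1 : ℕ) : ℝ≥0) * Rrate S w ℓ r M
      ≤ ∑ i ∈ M, Rrate S w ℓ r (M \ {i}) := by
    have hstep1 : ((N - 1 : ℕ) : ℝ≥0) * Rrate S w ℓ r M
        = ∑ _k ∈ Finset.Icc 1 (N - 1), Rrate S w ℓ r M := by
      rw [Finset.sum_const, Nat.card_Icc]
      have h9 : N - 1 + 1 - 1 = N - 1 := by omega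
      rw [h9, nsmul_eq_mul]
    rw [hstep1]
    calc ∑ _k ∈ Finset.Icc 1 (N - 1), Rrate S w ℓ r M
        ≤ ∑ k ∈ Finset.Icc 1 (N - 1),
            ∑ s ∈ S, w s * ((T k).sup (ℓ s) + (U (N - k)).sup (r s)) :=
          Finset.sum_le_sum hRk
      _ = (∑ k ∈ Finset.Icc 1 (N - 1), ∑ s ∈ S, w s * (T k).sup (ℓ s))
          + ∑ k ∈ Finset.Icc 1 (N - 1), ∑ s ∈ S, w s * (U (N - k)).sup (r s) := by
          rw [← Finset.sum_add_distrib]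
          apply Finset.sum_congr rfl
          intro k _
          rw [← Finset.sum_add_distrib]
          apply Finset.sum_congr rfl
          intro s _
          rw [mul_add]
      _ = (∑ k ∈ Finset.Icc 1 (N - 1), ∑ s ∈ S, w s * (T k).sup (ℓ s))
          + ∑ k ∈ Finset.Icc 1 (N - 1), ∑ s ∈ S, w s * (U k).sup (r s) := by
          congr 1
          apply Finset.sum_nbij' (i := fun k => N - k) (j := fun k => N - k)
          · intro a ha; rw [Finset.mem_Icc] at *; omega
          · intro a ha; rw [Finset.mem_Icc] at *; omega
          · intro a ha; rw [Finset.mem_Icc] at ha; omega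
          · intro a ha; rw [Finset.mem_Icc] at ha; omega
          · intro a _; rfl
      _ ≤ (∑ k ∈ Finset.Icc 1 N, ∑ s ∈ S, w s * (T k).sup (ℓ s))
          + ∑ k ∈ Finset.Icc 1 N, ∑ s ∈ S, w s * (U k).sup (r s) := by
          apply add_le_add <;>
            exact Finset.sum_le_sum_of_subset (Finset.Icc_subset_Icc_right (by omega))
      _ = (∑ s ∈ S, w s * ∑ k ∈ Finset.Icc 1 N, (T k).sup (ℓ s))
          + ∑ s ∈ S, w s * ∑ k ∈ Finset.Icc 1 N, (U k).sup (r s) := by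
          rw [Finset.sum_comm (s := Finset.Icc 1 N),
              Finset.sum_comm (s := Finset.Icc 1 N)]
          congr 1 <;>
          · apply Finset.sum_congr rfl
            intro s _
            rw [Finset.mul_sum]
      _ ≤ (∑ s ∈ S, w s * ∑ i ∈ M, (B i).sup (ℓ s))
          + ∑ s ∈ S, w s * ∑ i ∈ M, (C i).sup (r s) := by
          refine add_le_add ?_ ?_
          · apply Finset.sum_le_sum
            intro s _
            apply mul_le_mul_right
            have h := lemA (ℓ s) M B M
            rw [hMcard] at h
            exact h
          · apply Finset.sum_le_sum
            intro s _
            apply mul_le_mul_right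
            have h := lemA (r s) M C M
            rw [hMcard] at h
            exact h
      _ = ∑ i ∈ M, ∑ s ∈ S, w s * ((B i).sup (ℓ s) + (C i).sup (r s)) := by
          rw [Finset.sum_comm (s := M)]
          rw [← Finset.sum_add_distrib]
          apply Finset.sum_congr rfl
          intro s _
          rw [Finset.mul_sum, Finset.mul_sum, ← Finset.sum_add_distrib]
          apply Finset.sum_congr rfl
          intro i _
          rw [mul_add]
      _ = ∑ i ∈ M, Rrate S w ℓ r (M \ {i}) := by
          apply Finset.sum_congr rfl
          intro i _
          rw [hBval i, hC]
  -- pigeonhole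
  by_contra hcon
  push_neg at hcon
  have hlt : ∀ i ∈ M, Rrate S w ℓ r (M \ {i})
      < ((N - 1 : ℕ) : ℝ≥0) / (N : ℝ≥0) * Rrate S w ℓ r M := hcon
  have hsum := Finset.sum_lt_sum_of_nonempty hMne hlt
  have hconst : ∑ _i ∈ M, ((N - 1 : ℕ) : ℝ≥0) / (N : ℝ≥0) * Rrate S w ℓ r M
      = ((N - 1 : ℕ) : ℝ≥0) * Rrate S w ℓ r M := by
    rw [Finset.sum_const, hMcard, nsmul_eq_mul, ← mul_assoc]
    congr 1
    have hN0 : (N : ℝ≥0) ≠ 0 := Nat.cast_ne_zero.2 (by omega)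
    rw [mul_div_assoc']
    rw [mul_comm]
    rw [mul_div_assoc]
    rw [div_self hN0, mul_one]
  rw [hconst] at hsum
  exact absurd key (not_le.2 hsum)
end

section
/- General k simplification under a fixed schedule: With R(M) the weighted min-cut function as above, for every k ∈ [1:N] there exists a subset K ⊆ [1:N] with |K| = k such that R(K) ≥ (k/N)·R([1:N]). -/
open Finset
open scoped NNReal

/-- Frank's discrete separation theorem on a finite ground set: a submodular function
dominating a supermodular function can be separated by a modular (affine) function. -/
lemma frank_sep (M : Finset ℕ) :
    ∀ f g : Finset ℕ → ℝ,
      (∀ X, X ⊆ M → ∀ Y, Y ⊆ M → f (X ∪ Y) + f (X ∩ Y) ≤ f X + f Y) →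
      (∀ X, X ⊆ M → ∀ Y, Y ⊆ M → g X + g Y ≤ g (X ∪ Y) + g (X ∩ Y)) →
      (∀ B, B ⊆ M → g B ≤ f B) →
      ∃ c : ℝ, ∃ x : ℕ → ℝ,
        ∀ B, B ⊆ M → g B ≤ c + ∑ i ∈ B, x i ∧ c + ∑ i ∈ B, x i ≤ f B := by
  classical
  induction M using Finset.induction_on with
  | empty =>
      intro f g hf hg hgf
      refine ⟨g ∅, 0, ?_⟩
      intro B hB
      have hB' := Finset.subset_empty.mp hB
      subst hB'
      simp only [Finset.sum_empty, add_zero]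
      exact ⟨le_refl _, hgf ∅ (Finset.Subset.refl ∅)⟩
  | @insert e s hes IH =>
      intro f g hf hg hgf
      have hpow : (s.powerset).Nonempty := ⟨∅, by simp⟩
      obtain ⟨Y₀, hY₀mem, hβeq⟩ :=
        Finset.exists_mem_eq_inf' hpow (fun X => f (insert e X) - g X)
      have hY₀s : Y₀ ⊆ s := Finset.mem_powerset.mp hY₀mem
      have hβ_le : ∀ X, X ⊆ s → f (insert e Y₀) - g Y₀ ≤ f (insert e X) - g X := by
        intro X hX
        have h1 : s.powerset.inf' hpow (fun X => f (insert e X) - g X)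
            ≤ f (insert e X) - g X :=
          Finset.inf'_le _ (Finset.mem_powerset.mpr hX)
        rw [hβeq] at h1
        exact h1
      set β : ℝ := f (insert e Y₀) - g Y₀ with hβ
      have hsub : ∀ X : Finset ℕ, X ⊆ s → X ⊆ insert e s :=
        fun X hX => hX.trans (Finset.subset_insert e s)
      have hsubi : ∀ X : Finset ℕ, X ⊆ s → insert e X ⊆ insert e s :=
        fun X hX => Finset.insert_subset_insert e hX
      have hnm : ∀ X : Finset ℕ, X ⊆ s → e ∉ X := fun X hX he => hes (hX he)
      -- the cross inequality
      have cross : ∀ X, X ⊆ s → g (insert e X) - β ≤ f X := by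
        intro X hX
        have h1 := hf (insert e Y₀) (hsubi _ hY₀s) X (hsub _ hX)
        rw [Finset.insert_union, Finset.insert_inter_of_notMem (hnm X hX),
          Finset.union_comm Y₀ X, Finset.inter_comm Y₀ X] at h1
        have h2 := hg (insert e X) (hsubi _ hX) Y₀ (hsub _ hY₀s)
        rw [Finset.insert_union, Finset.insert_inter_of_notMem (hnm Y₀ hY₀s)] at h2
        have h3 := hgf (insert e (X ∪ Y₀)) (hsubi _ (Finset.union_subset hX hY₀s))
        have h4 := hgf (X ∩ Y₀) ((Finset.inter_subset_left).trans (hsub _ hX))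
        rw [hβ]
        linarith
      -- submodularity of the reduced f
      have hmin : ∀ X, X ⊆ s → ∀ Y, Y ⊆ s →
          min (f (X ∪ Y)) (f (insert e (X ∪ Y)) - β)
            + min (f (X ∩ Y)) (f (insert e (X ∩ Y)) - β)
          ≤ min (f X) (f (insert e X) - β) + min (f Y) (f (insert e Y) - β) := by
        intro X hX Y hY
        rcases le_total (f X) (f (insert e X) - β) with hx1 | hx1 <;>
          rcases le_total (f Y) (f (insert e Y) - β) with hy1 | hy1
        · rw [min_eq_left hx1, min_eq_left hy1]
          have h := hf X (hsub _ hX) Y (hsub _ hY)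
          have m1 := min_le_left (f (X ∪ Y)) (f (insert e (X ∪ Y)) - β)
          have m2 := min_le_left (f (X ∩ Y)) (f (insert e (X ∩ Y)) - β)
          linarith
        · rw [min_eq_left hx1, min_eq_right hy1]
          have h := hf X (hsub _ hX) (insert e Y) (hsubi _ hY)
          rw [Finset.union_insert, Finset.inter_insert_of_notMem (hnm X hX)] at h
          have m1 := min_le_right (f (X ∪ Y)) (f (insert e (X ∪ Y)) - β)
          have m2 := min_le_left (f (X ∩ Y)) (f (insert e (X ∩ Y)) - β)
          linarith
        · rw [min_eq_right hx1, min_eq_left hy1]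
          have h := hf (insert e X) (hsubi _ hX) Y (hsub _ hY)
          rw [Finset.insert_union, Finset.insert_inter_of_notMem (hnm Y hY)] at h
          have m1 := min_le_right (f (X ∪ Y)) (f (insert e (X ∪ Y)) - β)
          have m2 := min_le_left (f (X ∩ Y)) (f (insert e (X ∩ Y)) - β)
          linarith
        · rw [min_eq_right hx1, min_eq_right hy1]
          have h := hf (insert e X) (hsubi _ hX) (insert e Y) (hsubi _ hY)
          have e1 : insert e X ∪ insert e Y = insert e (X ∪ Y) := by
            rw [Finset.insert_union, Finset.union_insert, Finset.insert_idem]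
          have e2 : insert e X ∩ insert e Y = insert e (X ∩ Y) := by
            rw [Finset.insert_inter_of_mem (Finset.mem_insert_self e Y),
              Finset.inter_insert_of_notMem (hnm X hX)]
          rw [e1, e2] at h
          have m1 := min_le_right (f (X ∪ Y)) (f (insert e (X ∪ Y)) - β)
          have m2 := min_le_right (f (X ∩ Y)) (f (insert e (X ∩ Y)) - β)
          linarith
      -- supermodularity of the reduced g
      have hmax : ∀ X, X ⊆ s → ∀ Y, Y ⊆ s →
          max (g X) (g (insert e X) - β) + max (g Y) (g (insert e Y) - β)
          ≤ max (g (X ∪ Y)) (g (insert e (X ∪ Y)) - β)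
            + max (g (X ∩ Y)) (g (insert e (X ∩ Y)) - β) := by
        intro X hX Y hY
        rcases le_total (g (insert e X) - β) (g X) with hx1 | hx1 <;>
          rcases le_total (g (insert e Y) - β) (g Y) with hy1 | hy1
        · rw [max_eq_left hx1, max_eq_left hy1]
          have h := hg X (hsub _ hX) Y (hsub _ hY)
          have m1 := le_max_left (g (X ∪ Y)) (g (insert e (X ∪ Y)) - β)
          have m2 := le_max_left (g (X ∩ Y)) (g (insert e (X ∩ Y)) - β)
          linarith
        · rw [max_eq_left hx1, max_eq_right hy1]
          have h := hg X (hsub _ hX) (insert e Y) (hsubi _ hY)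
          rw [Finset.union_insert, Finset.inter_insert_of_notMem (hnm X hX)] at h
          have m1 := le_max_right (g (X ∪ Y)) (g (insert e (X ∪ Y)) - β)
          have m2 := le_max_left (g (X ∩ Y)) (g (insert e (X ∩ Y)) - β)
          linarith
        · rw [max_eq_right hx1, max_eq_left hy1]
          have h := hg (insert e X) (hsubi _ hX) Y (hsub _ hY)
          rw [Finset.insert_union, Finset.insert_inter_of_notMem (hnm Y hY)] at h
          have m1 := le_max_right (g (X ∪ Y)) (g (insert e (X ∪ Y)) - β)
          have m2 := le_max_left (g (X ∩ Y)) (g (insert e (X ∩ Y)) - β)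
          linarith
        · rw [max_eq_right hx1, max_eq_right hy1]
          have h := hg (insert e X) (hsubi _ hX) (insert e Y) (hsubi _ hY)
          have e1 : insert e X ∪ insert e Y = insert e (X ∪ Y) := by
            rw [Finset.insert_union, Finset.union_insert, Finset.insert_idem]
          have e2 : insert e X ∩ insert e Y = insert e (X ∩ Y) := by
            rw [Finset.insert_inter_of_mem (Finset.mem_insert_self e Y),
              Finset.inter_insert_of_notMem (hnm X hX)]
          rw [e1, e2] at h
          have m1 := le_max_right (g (X ∪ Y)) (g (insert e (X ∪ Y)) - β)
          have m2 := le_max_right (g (X ∩ Y)) (g (insert e (X ∩ Y)) - β)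
          linarith
      -- reduced g ≤ reduced f
      have hle : ∀ B, B ⊆ s →
          max (g B) (g (insert e B) - β) ≤ min (f B) (f (insert e B) - β) := by
        intro B hB
        apply max_le
        · apply le_min (hgf B (hsub _ hB))
          have := hβ_le B hB
          rw [hβ]
          linarith
        · apply le_min (cross B hB)
          have := hgf (insert e B) (hsubi _ hB)
          linarith
      obtain ⟨c, x, hcx⟩ := IH (fun X => min (f X) (f (insert e X) - β))
        (fun X => max (g X) (g (insert e X) - β)) hmin hmax hle
      refine ⟨c, Function.update x e β, ?_⟩
      intro B hB
      by_cases heB : e ∈ B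
      · have hXs : B.erase e ⊆ s := by
          intro i hi
          have hiB := Finset.mem_of_mem_erase hi
          have hine : i ≠ e := Finset.ne_of_mem_erase hi
          rcases Finset.mem_insert.mp (hB hiB) with h | h
          · exact absurd h hine
          · exact h
        have hBeq : B = insert e (B.erase e) := (Finset.insert_erase heB).symm
        have hsum : ∑ i ∈ B, Function.update x e β i = β + ∑ i ∈ B.erase e, x i := by
          conv_lhs => rw [hBeq]
          rw [Finset.sum_insert (Finset.notMem_erase e B), Function.update_self]
          congr 1
          refine Finset.sum_congr rfl fun i hi => ?_
          exact Function.update_of_ne (Finset.ne_of_mem_erase hi) β x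
        have h := hcx (B.erase e) hXs
        have h1 : g (insert e (B.erase e)) - β ≤ c + ∑ i ∈ B.erase e, x i :=
          le_trans (le_max_right _ _) h.1
        have h2 : c + ∑ i ∈ B.erase e, x i ≤ f (insert e (B.erase e)) - β :=
          le_trans h.2 (min_le_right _ _)
        constructor
        · rw [hsum]
          conv_lhs => rw [hBeq]
          linarith
        · rw [hsum]
          conv_rhs => rw [hBeq]
          linarith
      · have hBs : B ⊆ s := by
          intro i hi
          rcases Finset.mem_insert.mp (hB hi) with h | h
          · exact absurd (h ▸ hi) heB
          · exact h
        have hsum : ∑ i ∈ B, Function.update x e β i = ∑ i ∈ B, x i :=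
          Finset.sum_congr rfl fun i hi =>
            Function.update_of_ne (fun hie => heB (by rw [← hie]; exact hi)) β x
        have h := hcx B hBs
        rw [hsum]
        exact ⟨le_trans (le_max_left _ _) h.1, le_trans h.2 (min_le_left _ _)⟩

/-- Top-`k` selection: there is a `k`-subset capturing at least a `k/|M|` fraction
of the total sum. -/
lemma exists_topk (M : Finset ℕ) (x : ℕ → ℝ) :
    ∀ k, k ≤ M.card → ∃ K, K ⊆ M ∧ K.card = k ∧
      (k : ℝ) * ∑ i ∈ M, x i ≤ (M.card : ℝ) * ∑ i ∈ K, x i := by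
  classical
  have main : ∀ k, k ≤ M.card → ∃ K, K ⊆ M ∧ K.card = k ∧
      ∀ i ∈ K, ∀ j ∈ M \ K, x j ≤ x i := by
    intro k
    induction k with
    | zero => exact fun _ => ⟨∅, Finset.empty_subset M, Finset.card_empty, by simp⟩
    | succ n ih =>
      intro hk
      obtain ⟨K, hKM, hKc, hcomp⟩ := ih (Nat.le_of_succ_le hk)
      have hne : (M \ K).Nonempty := by
        rw [← Finset.card_pos, Finset.card_sdiff_of_subset hKM, hKc]
        omega
      obtain ⟨a, haMK, hamax⟩ := Finset.exists_max_image (M \ K) x hne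
      have haM : a ∈ M := (Finset.mem_sdiff.mp haMK).1
      have haK : a ∉ K := (Finset.mem_sdiff.mp haMK).2
      refine ⟨insert a K, Finset.insert_subset haM hKM, ?_, ?_⟩
      · rw [Finset.card_insert_of_notMem haK, hKc]
      · intro i hi j hj
        have hjMK : j ∈ M \ K := by
          rw [Finset.mem_sdiff] at hj ⊢
          exact ⟨hj.1, fun h => hj.2 (Finset.mem_insert_of_mem h)⟩
        rcases Finset.mem_insert.mp hi with rfl | hiK
        · exact hamax j hjMK
        · exact hcomp i hiK j hjMK
  intro k hk
  obtain ⟨K, hKM, hKc, hcomp⟩ := main k hk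
  refine ⟨K, hKM, hKc, ?_⟩
  have h2 : ∀ i ∈ K, ∑ j ∈ M \ K, x j ≤ ((M \ K).card : ℝ) * x i := by
    intro i hi
    have := Finset.sum_le_card_nsmul (M \ K) x (x i) (fun j hj => hcomp i hi j hj)
    rwa [nsmul_eq_mul] at this
  have h3 := Finset.sum_le_sum h2
  rw [Finset.sum_const, ← Finset.mul_sum, nsmul_eq_mul, hKc] at h3
  have hcard : ((M \ K).card : ℝ) = (M.card : ℝ) - k := by
    rw [Finset.card_sdiff_of_subset hKM, hKc, Nat.cast_sub hk]
  have hsplit : ∑ j ∈ M \ K, x j = ∑ i ∈ M, x i - ∑ i ∈ K, x i :=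
    Finset.sum_sdiff_eq_sub hKM
  rw [hcard, hsplit] at h3
  ring_nf at h3 ⊢
  linarith

/-- General `k` simplification under a fixed schedule: for every `k ∈ [1:N]` there is a
subset `K ⊆ [1:N]` with `|K| = k` such that `R(K) ≥ (k/N)·R([1:N])`. -/
theorem stmt_16 {σ : Type*} (S : Finset σ) (w : σ → ℝ≥0)
    (hw : ∑ s ∈ S, w s = 1) (N : ℕ) (hN : 1 ≤ N) (ℓ r : σ → ℕ → ℝ≥0) :
    ∀ k ∈ Finset.Icc 1 N,
      ∃ K : Finset ℕ, K ⊆ Finset.Icc 1 N ∧ K.card = k ∧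
        ((k : ℝ≥0) / (N : ℝ≥0)) * Rrate S w ℓ r (Finset.Icc 1 N) ≤ Rrate S w ℓ r K := by
  classical
  intro k hk
  rw [Finset.mem_Icc] at hk
  obtain ⟨hk1, hkN⟩ := hk
  set M : Finset ℕ := Finset.Icc 1 N with hM
  have hMcard : M.card = N := by rw [hM, Nat.card_Icc]; omega
  set Lr : Finset ℕ → ℝ := fun A => ∑ s ∈ S, (w s : ℝ) * ((A.sup (ℓ s) : ℝ≥0) : ℝ) with hLr
  set Rf : Finset ℕ → ℝ := fun A => ∑ s ∈ S, (w s : ℝ) * ((A.sup (r s) : ℝ≥0) : ℝ) with hRf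
  have coeval : ∀ Kq A : Finset ℕ,
      ((∑ s ∈ S, w s * (A.sup (ℓ s) + (Kq \ A).sup (r s)) : ℝ≥0) : ℝ)
        = Lr A + Rf (Kq \ A) := by
    intro Kq A
    simp only [hLr, hRf]
    rw [NNReal.coe_sum, ← Finset.sum_add_distrib]
    refine Finset.sum_congr rfl fun s _ => ?_
    push_cast
    ring
  set V : ℝ := ((Rrate S w ℓ r M : ℝ≥0) : ℝ) with hV
  have hV0 : 0 ≤ V := (Rrate S w ℓ r M).coe_nonneg
  have hVle : ∀ A, A ⊆ M → V ≤ Lr A + Rf (M \ A) := by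
    intro A hA
    have h1 : Rrate S w ℓ r M ≤ ∑ s ∈ S, w s * (A.sup (ℓ s) + (M \ A).sup (r s)) :=
      Finset.inf'_le _ (Finset.mem_powerset.mpr hA)
    have h2 := NNReal.coe_le_coe.mpr h1
    rw [coeval M A] at h2
    exact h2
  have hattain : ∀ Kq : Finset ℕ, ∃ A, A ⊆ Kq ∧
      ((Rrate S w ℓ r Kq : ℝ≥0) : ℝ) = Lr A + Rf (Kq \ A) := by
    intro Kq
    obtain ⟨A, hAmem, hAeq⟩ := Finset.exists_mem_eq_inf' (Finset.powerset_nonempty Kq)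
      (fun A => ∑ s ∈ S, w s * (A.sup (ℓ s) + (Kq \ A).sup (r s)))
    refine ⟨A, Finset.mem_powerset.mp hAmem, ?_⟩
    rw [← coeval Kq A]
    exact_mod_cast hAeq
  -- basic facts on Lr and Rf
  have hsupsub : ∀ (v : ℕ → ℝ≥0) (X Y : Finset ℕ),
      (X ∪ Y).sup v + (X ∩ Y).sup v ≤ X.sup v + Y.sup v := by
    intro v X Y
    rw [Finset.sup_union]
    rcases le_total (X.sup v) (Y.sup v) with h | h
    · rw [sup_eq_right.mpr h, add_comm]
      exact add_le_add_left (Finset.sup_mono Finset.inter_subset_left) _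
    · rw [sup_eq_left.mpr h]
      exact add_le_add_right (Finset.sup_mono Finset.inter_subset_right) _
  have hLsub : ∀ X Y, Lr (X ∪ Y) + Lr (X ∩ Y) ≤ Lr X + Lr Y := by
    intro X Y
    simp only [hLr]
    rw [← Finset.sum_add_distrib, ← Finset.sum_add_distrib]
    refine Finset.sum_le_sum fun s _ => ?_
    have h := hsupsub (ℓ s) X Y
    have h' : (((X ∪ Y).sup (ℓ s) : ℝ≥0) : ℝ) + (((X ∩ Y).sup (ℓ s) : ℝ≥0) : ℝ)
        ≤ ((X.sup (ℓ s) : ℝ≥0) : ℝ) + ((Y.sup (ℓ s) : ℝ≥0) : ℝ) := by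
      exact_mod_cast h
    rw [← mul_add, ← mul_add]
    exact mul_le_mul_of_nonneg_left h' (w s).coe_nonneg
  have hRsub : ∀ X Y, Rf (X ∪ Y) + Rf (X ∩ Y) ≤ Rf X + Rf Y := by
    intro X Y
    simp only [hRf]
    rw [← Finset.sum_add_distrib, ← Finset.sum_add_distrib]
    refine Finset.sum_le_sum fun s _ => ?_
    have h := hsupsub (r s) X Y
    have h' : (((X ∪ Y).sup (r s) : ℝ≥0) : ℝ) + (((X ∩ Y).sup (r s) : ℝ≥0) : ℝ)
        ≤ ((X.sup (r s) : ℝ≥0) : ℝ) + ((Y.sup (r s) : ℝ≥0) : ℝ) := by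
      exact_mod_cast h
    rw [← mul_add, ← mul_add]
    exact mul_le_mul_of_nonneg_left h' (w s).coe_nonneg
  have hLle : ∀ X Y : Finset ℕ, X ⊆ Y → Lr X ≤ Lr Y := by
    intro X Y h
    simp only [hLr]
    refine Finset.sum_le_sum fun s _ => ?_
    refine mul_le_mul_of_nonneg_left ?_ (w s).coe_nonneg
    exact_mod_cast Finset.sup_mono h
  have hRfle : ∀ X Y : Finset ℕ, X ⊆ Y → Rf X ≤ Rf Y := by
    intro X Y h
    simp only [hRf]
    refine Finset.sum_le_sum fun s _ => ?_
    refine mul_le_mul_of_nonneg_left ?_ (w s).coe_nonneg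
    exact_mod_cast Finset.sup_mono h
  have hLr0 : ∀ X, 0 ≤ Lr X := by
    intro X
    simp only [hLr]
    exact Finset.sum_nonneg fun s _ => mul_nonneg (w s).coe_nonneg (by positivity)
  have hRf0 : ∀ X, 0 ≤ Rf X := by
    intro X
    simp only [hRf]
    exact Finset.sum_nonneg fun s _ => mul_nonneg (w s).coe_nonneg (by positivity)
  have hcap : ∀ X Y : Finset ℕ, M \ (X ∪ Y) = (M \ X) ∩ (M \ Y) := by
    intro X Y
    ext a
    simp only [Finset.mem_sdiff, Finset.mem_union, Finset.mem_inter]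
    tauto
  have hcup : ∀ X Y : Finset ℕ, M \ (X ∩ Y) = (M \ X) ∪ (M \ Y) := by
    intro X Y
    ext a
    simp only [Finset.mem_sdiff, Finset.mem_union, Finset.mem_inter]
    tauto
  -- truncated submodular upper function and supermodular lower function
  set fF : Finset ℕ → ℝ := fun B => min (Lr B) V with hfF
  set gF : Finset ℕ → ℝ := fun B => max 0 (V - Rf (M \ B)) with hgF
  have hfmono : ∀ X Y : Finset ℕ, X ⊆ Y → fF X ≤ fF Y := by
    intro X Y h
    simp only [hfF]
    exact min_le_min (hLle X Y h) le_rfl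
  have hgmono : ∀ X Y : Finset ℕ, X ⊆ Y → gF X ≤ gF Y := by
    intro X Y h
    simp only [hgF]
    refine max_le_max le_rfl ?_
    have : Rf (M \ Y) ≤ Rf (M \ X) :=
      hRfle _ _ (Finset.sdiff_subset_sdiff (Finset.Subset.refl M) h)
    linarith
  have hfsub : ∀ X, X ⊆ M → ∀ Y, Y ⊆ M → fF (X ∪ Y) + fF (X ∩ Y) ≤ fF X + fF Y := by
    intro X _ Y _
    rcases le_total V (Lr X) with h | h
    · have h1 : fF X = V := by simp only [hfF]; exact min_eq_right h
      have h2 : fF (X ∪ Y) ≤ V := by simp only [hfF]; exact min_le_right _ _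
      have h3 : fF (X ∩ Y) ≤ fF Y := hfmono _ _ Finset.inter_subset_right
      linarith
    · rcases le_total V (Lr Y) with h' | h'
      · have h1 : fF Y = V := by simp only [hfF]; exact min_eq_right h'
        have h2 : fF (X ∪ Y) ≤ V := by simp only [hfF]; exact min_le_right _ _
        have h3 : fF (X ∩ Y) ≤ fF X := hfmono _ _ Finset.inter_subset_left
        linarith
      · have h1 : fF X = Lr X := by simp only [hfF]; exact min_eq_left h
        have h2 : fF Y = Lr Y := by simp only [hfF]; exact min_eq_left h'
        have h3 : fF (X ∪ Y) ≤ Lr (X ∪ Y) := by simp only [hfF]; exact min_le_left _ _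
        have h4 : fF (X ∩ Y) ≤ Lr (X ∩ Y) := by simp only [hfF]; exact min_le_left _ _
        have h5 := hLsub X Y
        linarith
  have hg0 : ∀ Z, 0 ≤ gF Z := by
    intro Z
    simp only [hgF]
    exact le_max_left _ _
  have hgsup : ∀ X, X ⊆ M → ∀ Y, Y ⊆ M → gF X + gF Y ≤ gF (X ∪ Y) + gF (X ∩ Y) := by
    intro X _ Y _
    rcases le_total (V - Rf (M \ X)) 0 with h | h
    · have h1 : gF X = 0 := by simp only [hgF]; exact max_eq_left h
      have h2 : gF Y ≤ gF (X ∪ Y) := hgmono _ _ Finset.subset_union_right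
      have h3 := hg0 (X ∩ Y)
      linarith
    · rcases le_total (V - Rf (M \ Y)) 0 with h' | h'
      · have h1 : gF Y = 0 := by simp only [hgF]; exact max_eq_left h'
        have h2 : gF X ≤ gF (X ∪ Y) := hgmono _ _ Finset.subset_union_left
        have h3 := hg0 (X ∩ Y)
        linarith
      · have h1 : gF X = V - Rf (M \ X) := by simp only [hgF]; exact max_eq_right h
        have h2 : gF Y = V - Rf (M \ Y) := by simp only [hgF]; exact max_eq_right h'
        have h3 : V - Rf (M \ (X ∪ Y)) ≤ gF (X ∪ Y) := by
          simp only [hgF]; exact le_max_right _ _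
        have h4 : V - Rf (M \ (X ∩ Y)) ≤ gF (X ∩ Y) := by
          simp only [hgF]; exact le_max_right _ _
        have h5 := hRsub (M \ X) (M \ Y)
        rw [← hcup X Y, ← hcap X Y] at h5
        linarith
  have hgf : ∀ B, B ⊆ M → gF B ≤ fF B := by
    intro B hB
    simp only [hgF, hfF]
    apply max_le
    · exact le_min (hLr0 B) hV0
    · apply le_min
      · have := hVle B hB
        linarith
      · have := hRf0 (M \ B)
        linarith
  obtain ⟨c, x, hcx⟩ := frank_sep M fF gF hfsub hgsup hgf
  have hc0 : 0 ≤ c := by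
    have h := (hcx ∅ (Finset.empty_subset M)).1
    have h0 : (0 : ℝ) ≤ gF ∅ := hg0 ∅
    simp only [Finset.sum_empty, add_zero] at h
    linarith
  have hT : c + ∑ i ∈ M, x i ≤ V := by
    have h := (hcx M (Finset.Subset.refl M)).2
    have h2 : fF M ≤ V := by simp only [hfF]; exact min_le_right _ _
    linarith
  have hKbound : ∀ Kq, Kq ⊆ M →
      V - ∑ i ∈ M, x i + ∑ i ∈ Kq, x i ≤ ((Rrate S w ℓ r Kq : ℝ≥0) : ℝ) := by
    intro Kq hKq
    obtain ⟨A, hAK, hAeq⟩ := hattain Kq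
    rw [hAeq]
    have hA_M : A ⊆ M := hAK.trans hKq
    have h1 : c + ∑ i ∈ A, x i ≤ Lr A := by
      have ha := (hcx A hA_M).2
      have hb : fF A ≤ Lr A := by simp only [hfF]; exact min_le_left _ _
      linarith
    have hBM : A ∪ (M \ Kq) ⊆ M := Finset.union_subset hA_M Finset.sdiff_subset
    have hMB : M \ (A ∪ (M \ Kq)) = Kq \ A := by
      ext a
      constructor
      · intro ha
        rw [Finset.mem_sdiff] at ha
        obtain ⟨haM, hn⟩ := ha
        rw [Finset.mem_union, Finset.mem_sdiff] at hn
        push_neg at hn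
        rw [Finset.mem_sdiff]
        exact ⟨hn.2 haM, hn.1⟩
      · intro ha
        rw [Finset.mem_sdiff] at ha
        rw [Finset.mem_sdiff, Finset.mem_union, Finset.mem_sdiff]
        refine ⟨hKq ha.1, ?_⟩
        rintro (h | ⟨_, hnk⟩)
        · exact ha.2 h
        · exact hnk ha.1
    have hdisj : Disjoint A (M \ Kq) := by
      rw [Finset.disjoint_left]
      intro a haA ham
      exact (Finset.mem_sdiff.mp ham).2 (hAK haA)
    have h2 : V - c - (∑ i ∈ A, x i) - (∑ i ∈ M \ Kq, x i) ≤ Rf (Kq \ A) := by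
      have hgB := (hcx (A ∪ (M \ Kq)) hBM).1
      have hgB2 : V - Rf (M \ (A ∪ (M \ Kq))) ≤ gF (A ∪ (M \ Kq)) := by
        simp only [hgF]
        exact le_max_right _ _
      rw [hMB] at hgB2
      rw [Finset.sum_union hdisj] at hgB
      linarith
    have hsd : ∑ i ∈ M \ Kq, x i = ∑ i ∈ M, x i - ∑ i ∈ Kq, x i :=
      Finset.sum_sdiff_eq_sub hKq
    linarith
  obtain ⟨K, hKM, hKcard, hKx⟩ := exists_topk M x k (by rw [hMcard]; exact hkN)
  rw [hMcard] at hKx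
  refine ⟨K, hKM, hKcard, ?_⟩
  rw [← NNReal.coe_le_coe]
  push_cast
  rw [← hV]
  have hRK := hKbound K hKM
  have hNpos : (0 : ℝ) < (N : ℝ) := by
    have : 0 < N := hN
    exact_mod_cast this
  rw [div_mul_eq_mul_div, div_le_iff₀ hNpos]
  have hVT : 0 ≤ V - ∑ i ∈ M, x i := by linarith
  have hNk : (0 : ℝ) ≤ (N : ℝ) - (k : ℝ) := by
    have : (k : ℝ) ≤ (N : ℝ) := by exact_mod_cast hkN
    linarith
  have e1 : (N : ℝ) * (V - ∑ i ∈ M, x i + ∑ i ∈ K, x i)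
      ≤ (N : ℝ) * ((Rrate S w ℓ r K : ℝ≥0) : ℝ) :=
    mul_le_mul_of_nonneg_left hRK (le_of_lt hNpos)
  have e2 : (0 : ℝ) ≤ ((N : ℝ) - (k : ℝ)) * (V - ∑ i ∈ M, x i) := mul_nonneg hNk hVT
  nlinarith [e1, e2, hKx]
end

section
/- Leave-one-out guarantee for arbitrary subsets: With R(M) the weighted min-cut function as above and for any M ⊆ [1:N] with |M| = m ≥ 2, we have Σ_{i∈M} R(M\{i}) ≥ (m−1)·R(M); consequently there exists i ∈ M with R(M\{i}) ≥ ((m−1)/m)·R(M). -/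
open Finset
open scoped NNReal

/-- Uncrossing/greedy lemma: the sum of sups over the level sets of a family is at most
the sum of sups over the family. -/
lemma uncross_sup (f : ℕ → ℝ≥0) (G : Finset ℕ) (A : ℕ → Finset ℕ) :
    ∀ (K : ℕ) (I : Finset ℕ),
      ∑ k ∈ Finset.range K,
        (G.filter fun x => k < (I.filter fun i => x ∈ A i).card).sup f
      ≤ ∑ i ∈ I, (A i).sup f := by
  intro K
  induction K with
  | zero => intro I; simp
  | succ K ih =>
    intro I
    rw [Finset.sum_range_succ']
    by_cases h0 : (G.filter fun x => 0 < (I.filter fun i => x ∈ A i).card).Nonempty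
    · obtain ⟨x, hx, hsup⟩ := Finset.exists_mem_eq_sup _ h0 f
      rw [Finset.mem_filter] at hx
      obtain ⟨i₀, hi₀⟩ := Finset.card_pos.mp hx.2
      rw [Finset.mem_filter] at hi₀
      have h1 : ∑ k ∈ Finset.range K,
          (G.filter fun x => (k+1) < (I.filter fun i => x ∈ A i).card).sup f
          ≤ ∑ i ∈ I.erase i₀, (A i).sup f := by
        refine le_trans (Finset.sum_le_sum ?_) (ih (I.erase i₀))
        intro k _
        apply Finset.sup_mono
        intro y hy
        rw [Finset.mem_filter] at hy ⊢
        refine ⟨hy.1, ?_⟩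
        have hsub : (I.filter fun i => y ∈ A i)
            ⊆ insert i₀ ((I.erase i₀).filter fun i => y ∈ A i) := by
          intro j hj
          rw [Finset.mem_filter] at hj
          rcases eq_or_ne j i₀ with h | h
          · simp [h]
          · exact Finset.mem_insert_of_mem
              (Finset.mem_filter.mpr ⟨Finset.mem_erase.mpr ⟨h, hj.1⟩, hj.2⟩)
        have hcard : (I.filter fun i => y ∈ A i).card
            ≤ ((I.erase i₀).filter fun i => y ∈ A i).card + 1 :=
          le_trans (Finset.card_le_card hsub) (Finset.card_insert_le _ _)
        omega
      have h2 : (G.filter fun x => 0 < (I.filter fun i => x ∈ A i).card).sup f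
          ≤ (A i₀).sup f := by
        rw [hsup]; exact Finset.le_sup hi₀.2
      calc _ ≤ (∑ i ∈ I.erase i₀, (A i).sup f) + (A i₀).sup f := add_le_add h1 h2
        _ = ∑ i ∈ I, (A i).sup f := Finset.sum_erase_add _ _ hi₀.1
    · rw [Finset.not_nonempty_iff_eq_empty] at h0
      have hz : ∀ k : ℕ,
          (G.filter fun x => (k+1) < (I.filter fun i => x ∈ A i).card) = ∅ := by
        intro k
        rw [Finset.eq_empty_iff_forall_notMem]
        intro y hy
        rw [Finset.mem_filter] at hy
        have hmem : y ∈ G.filter fun x => 0 < (I.filter fun i => x ∈ A i).card :=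
          Finset.mem_filter.mpr ⟨hy.1, by omega⟩
        rw [h0] at hmem
        exact absurd hmem (Finset.notMem_empty y)
      rw [Finset.sum_congr rfl fun k _ => by rw [hz k, Finset.sup_empty], h0,
        Finset.sup_empty]
      simp

/-- Leave-one-out guarantee for arbitrary subsets: for `M ⊆ [1:N]` with `|M| = m ≥ 2`,
`Σ_{i∈M} R(M\{i}) ≥ (m−1)·R(M)`, and consequently there exists `i ∈ M` with
`R(M\{i}) ≥ ((m−1)/m)·R(M)`. -/
theorem stmt_17 {σ : Type*} (S : Finset σ) (w : σ → ℝ≥0)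
    (hw : ∑ s ∈ S, w s = 1) (N : ℕ) (ℓ r : σ → ℕ → ℝ≥0)
    (M : Finset ℕ) (hM : M ⊆ Finset.Icc 1 N) (m : ℕ) (hm : M.card = m) (hm2 : 2 ≤ m) :
    (((m - 1 : ℕ) : ℝ≥0) * Rrate S w ℓ r M
        ≤ ∑ i ∈ M, Rrate S w ℓ r (M \ {i})) ∧
    ∃ i ∈ M,
      (((m - 1 : ℕ) : ℝ≥0) / (m : ℝ≥0)) * Rrate S w ℓ r M
        ≤ Rrate S w ℓ r (M \ {i}) := by
  classical
  -- choose a minimizing cut for each leave-one-out set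
  have key : ∀ i : ℕ, ∃ A ∈ (M \ {i}).powerset,
      Rrate S w ℓ r (M \ {i})
        = ∑ s ∈ S, w s * (A.sup (ℓ s) + ((M \ {i}) \ A).sup (r s)) := by
    intro i
    exact Finset.exists_mem_eq_inf' (Finset.powerset_nonempty (M \ {i})) _
  choose A hA hval using key
  -- counting lemma
  have hab : ∀ x ∈ M, (M.filter fun i => x ∈ A i).card
      + (M.filter fun i => x ∈ (M \ {i}) \ A i).card = m - 1 := by
    intro x hx
    have hd : Disjoint (M.filter fun i => x ∈ A i)
        (M.filter fun i => x ∈ (M \ {i}) \ A i) := by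
      rw [Finset.disjoint_left]
      intro j hj1 hj2
      rw [Finset.mem_filter] at hj1 hj2
      exact (Finset.mem_sdiff.mp hj2.2).2 hj1.2
    have hu : (M.filter fun i => x ∈ A i) ∪ (M.filter fun i => x ∈ (M \ {i}) \ A i)
        = M.erase x := by
      ext j
      simp only [Finset.mem_union, Finset.mem_filter, Finset.mem_erase,
        Finset.mem_sdiff, Finset.mem_singleton]
      constructor
      · rintro (⟨hj, hja⟩ | ⟨hj, hjb, _⟩)
        · have hxm := Finset.mem_powerset.mp (hA j) hja
          rw [Finset.mem_sdiff, Finset.mem_singleton] at hxm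
          exact ⟨fun h => hxm.2 h.symm, hj⟩
        · exact ⟨fun h => hjb.2 h.symm, hj⟩
      · rintro ⟨hne, hj⟩
        by_cases hxa : x ∈ A j
        · exact Or.inl ⟨hj, hxa⟩
        · exact Or.inr ⟨hj, ⟨hx, fun h => hne h.symm⟩, hxa⟩
    have hc := Finset.card_union_of_disjoint hd
    rw [hu, Finset.card_erase_of_mem hx, hm] at hc
    omega
  -- the level-set cuts
  set D : ℕ → Finset ℕ :=
    fun k => M.filter fun x => k < (M.filter fun i => x ∈ A i).card with hD
  have hE : ∀ k, k < m - 1 →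
      (M.filter fun x => k < (M.filter fun i => x ∈ (M \ {i}) \ A i).card)
        = M \ D (m - 2 - k) := by
    intro k hk
    ext x
    rw [Finset.mem_filter, Finset.mem_sdiff, hD]
    by_cases hx : x ∈ M
    · have h := hab x hx
      simp only [hx, true_and, Finset.mem_filter]
      omega
    · simp [hx]
  have hcut : ∀ X : Finset ℕ, X ⊆ M →
      Rrate S w ℓ r M ≤ ∑ s ∈ S, w s * (X.sup (ℓ s) + (M \ X).sup (r s)) := by
    intro X hX
    exact Finset.inf'_le _ (Finset.mem_powerset.mpr hX)
  -- per-state inequalities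
  have hleft : ∀ s, ∑ k ∈ Finset.range (m - 1), (D k).sup (ℓ s)
      ≤ ∑ i ∈ M, (A i).sup (ℓ s) := by
    intro s
    exact uncross_sup (ℓ s) M A (m - 1) M
  have hright : ∀ s, ∑ k ∈ Finset.range (m - 1), (M \ D k).sup (r s)
      ≤ ∑ i ∈ M, ((M \ {i}) \ A i).sup (r s) := by
    intro s
    have e1 : ∑ k ∈ Finset.range (m - 1), (M \ D k).sup (r s)
        = ∑ k ∈ Finset.range (m - 1), (M \ D (m - 1 - 1 - k)).sup (r s) :=
      (Finset.sum_range_reflect (fun k => (M \ D k).sup (r s)) (m - 1)).symm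
    rw [e1]
    have e2 : ∀ k ∈ Finset.range (m - 1), (M \ D (m - 1 - 1 - k)).sup (r s)
        = (M.filter fun x =>
            k < (M.filter fun i => x ∈ (M \ {i}) \ A i).card).sup (r s) := by
      intro k hk
      rw [Finset.mem_range] at hk
      have : m - 1 - 1 - k = m - 2 - k := by omega
      rw [this, ← hE k hk]
    rw [Finset.sum_congr rfl e2]
    exact uncross_sup (r s) M (fun i => (M \ {i}) \ A i) (m - 1) M
  -- part 1
  have part1 : ((m - 1 : ℕ) : ℝ≥0) * Rrate S w ℓ r M
      ≤ ∑ i ∈ M, Rrate S w ℓ r (M \ {i}) := by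
    calc ((m - 1 : ℕ) : ℝ≥0) * Rrate S w ℓ r M
        = ∑ _k ∈ Finset.range (m - 1), Rrate S w ℓ r M := by
          rw [Finset.sum_const, Finset.card_range, nsmul_eq_mul]
      _ ≤ ∑ k ∈ Finset.range (m - 1),
            ∑ s ∈ S, w s * ((D k).sup (ℓ s) + (M \ D k).sup (r s)) :=
          Finset.sum_le_sum fun k _ => hcut (D k) (Finset.filter_subset _ _)
      _ = ∑ s ∈ S, w s * ((∑ k ∈ Finset.range (m - 1), (D k).sup (ℓ s))
            + ∑ k ∈ Finset.range (m - 1), (M \ D k).sup (r s)) := by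
          rw [Finset.sum_comm]
          refine Finset.sum_congr rfl fun s _ => ?_
          rw [← Finset.mul_sum, ← Finset.sum_add_distrib]
      _ ≤ ∑ s ∈ S, w s * ((∑ i ∈ M, (A i).sup (ℓ s))
            + ∑ i ∈ M, ((M \ {i}) \ A i).sup (r s)) :=
          Finset.sum_le_sum fun s _ =>
            mul_le_mul_right (add_le_add (hleft s) (hright s)) _
      _ = ∑ i ∈ M, Rrate S w ℓ r (M \ {i}) := by
          rw [Finset.sum_congr rfl fun i (_ : i ∈ M) => hval i]
          rw [Finset.sum_comm]
          refine Finset.sum_congr rfl fun s _ => ?_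
          rw [← Finset.mul_sum, ← Finset.sum_add_distrib]
  refine ⟨part1, ?_⟩
  -- part 2
  have hMne : M.Nonempty := by
    rw [← Finset.card_pos, hm]; omega
  have hm0 : (m : ℝ≥0) ≠ 0 := by
    simp only [Ne, Nat.cast_eq_zero]; omega
  have hconst : ∑ _i ∈ M, (((m - 1 : ℕ) : ℝ≥0) / (m : ℝ≥0)) * Rrate S w ℓ r M
      = ((m - 1 : ℕ) : ℝ≥0) * Rrate S w ℓ r M := by
    rw [Finset.sum_const, hm, nsmul_eq_mul, ← mul_assoc]
    congr 1
    rw [mul_div_assoc']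
    rw [mul_comm]
    exact mul_div_cancel_right₀ _ hm0
  have hsum : ∑ _i ∈ M, (((m - 1 : ℕ) : ℝ≥0) / (m : ℝ≥0)) * Rrate S w ℓ r M
      ≤ ∑ i ∈ M, Rrate S w ℓ r (M \ {i}) := by
    rw [hconst]; exact part1
  obtain ⟨i, hi, hle⟩ := Finset.exists_le_of_sum_le hMne hsum
  exact ⟨i, hi, hle⟩
end

section
/- Tightness of the 1/2 guarantee for worst-relay removal: In the N-relay diamond network with ℓ_i = 1/2, r_i = L for i ∈ [1:N−1] and ℓ_N = L, r_N = 1/2, every single relay has HD approximate capacity C({i}) = ℓ_i r_i/(ℓ_i + r_i) converging to 1/2 as L → ∞, and the FD min-cut of the subnetwork [1:N−1] satisfies C^FD([1:N−1]) = min_{A⊆[1:N−1]}(max_{i∈A} ℓ_i + max_{i∉A} r_i) = 1/2 (taking A = [1:N−1]), while C^FD({N, j}) ≥ 1 for every j ∈ [1:N−1] when L ≥ 1. -/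
open Finset Filter
open scoped NNReal Topology

lemma real_lim : Tendsto (fun x : ℝ => x * (1/2) / (x + 1/2)) atTop (𝓝 (1/2)) := by
  have h0 : Tendsto (fun x : ℝ => (1/4) / (x + 1/2)) atTop (𝓝 0) := by
    apply Tendsto.div_atTop tendsto_const_nhds
    exact tendsto_atTop_add_const_right _ _ tendsto_id
  have h : Tendsto (fun x : ℝ => 1/2 - (1/4) / (x + 1/2)) atTop (𝓝 (1/2 - 0)) :=
    tendsto_const_nhds.sub h0
  rw [sub_zero] at h
  refine h.congr' ?_
  filter_upwards [eventually_ge_atTop (1:ℝ)] with x hx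
  have hx2 : x + 1/2 ≠ 0 := by linarith
  field_simp
  ring

lemma nn_lim : Tendsto (fun L : ℝ≥0 => L * (1/2) / (L + 1/2)) atTop (𝓝 ((1:ℝ≥0)/2)) := by
  rw [← NNReal.tendsto_coe]
  push_cast
  exact real_lim.comp (NNReal.tendsto_coe_atTop.mpr tendsto_id)

/-- The worst-case network of Theorem 1: `ℓ_i = 1/2, r_i = L` for `i ∈ [1:N−1]`,
and `ℓ_N = L, r_N = 1/2`.  (a) Every single-relay HD approximate capacity
`ℓ_i r_i/(ℓ_i + r_i)` tends to `1/2` as `L → ∞`; (b) for `L ≥ 1`,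
`C^FD([1:N−1]) = 1/2`; (c) for `L ≥ 1`, `C^FD({N, j}) ≥ 1` for every `j ∈ [1:N−1]`. -/
theorem stmt_18 (N : ℕ) (hN : 2 ≤ N)
    (ℓ r : ℝ≥0 → ℕ → ℝ≥0)
    (hℓ : ∀ L : ℝ≥0, ∀ i, ℓ L i = if i = N then L else 1/2)
    (hr : ∀ L : ℝ≥0, ∀ i, r L i = if i = N then 1/2 else L) :
    (∀ i ∈ Finset.Icc 1 N,
      Tendsto (fun L : ℝ≥0 => ℓ L i * r L i / (ℓ L i + r L i)) atTop (𝓝 (1/2))) ∧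
    (∀ L : ℝ≥0, 1 ≤ L → CFD (ℓ L) (r L) (Finset.Icc 1 (N - 1)) = 1/2) ∧
    (∀ L : ℝ≥0, 1 ≤ L → ∀ j ∈ Finset.Icc 1 (N - 1),
      1 ≤ CFD (ℓ L) (r L) {N, j}) := by
  refine ⟨?_, ?_, ?_⟩
  · intro i _
    by_cases hi : i = N
    · simp only [hℓ, hr, hi, if_pos rfl]
      exact nn_lim
    · simp only [hℓ, hr, if_neg hi]
      have := nn_lim
      refine this.congr fun L => ?_
      rw [mul_comm, add_comm]
  · intro L hL
    have hmem1 : (1 : ℕ) ∈ Finset.Icc 1 (N-1) := by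
      simp [Finset.mem_Icc]; omega
    have hne : ∀ i ∈ Finset.Icc 1 (N-1), i ≠ N := by
      intro i hi; simp [Finset.mem_Icc] at hi; omega
    apply le_antisymm
    · calc CFD (ℓ L) (r L) (Finset.Icc 1 (N-1))
          ≤ (Finset.Icc 1 (N-1)).sup (ℓ L) + ((Finset.Icc 1 (N-1)) \ (Finset.Icc 1 (N-1))).sup (r L) :=
            Finset.inf'_le _ (Finset.mem_powerset_self _)
        _ = 1/2 := by
            rw [Finset.sdiff_self, Finset.sup_empty, bot_eq_zero', add_zero]
            have : (Finset.Icc 1 (N-1)).sup (ℓ L) = (Finset.Icc 1 (N-1)).sup (fun _ => (1:ℝ≥0)/2) :=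
              Finset.sup_congr rfl (fun i hi => by rw [hℓ, if_neg (hne i hi)])
            rw [this, Finset.sup_const ⟨1, hmem1⟩]
    · apply Finset.le_inf'
      intro A hA
      rw [Finset.mem_powerset] at hA
      rcases A.eq_empty_or_nonempty with rfl | ⟨a, ha⟩
      · rw [Finset.sup_empty, bot_eq_zero', zero_add, Finset.sdiff_empty]
        calc (1:ℝ≥0)/2 ≤ L := le_trans (by norm_num) hL
          _ = r L 1 := by rw [hr, if_neg (hne 1 hmem1)]
          _ ≤ _ := Finset.le_sup hmem1
      · calc (1:ℝ≥0)/2 = ℓ L a := by rw [hℓ, if_neg (hne a (hA ha))]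
          _ ≤ A.sup (ℓ L) := Finset.le_sup ha
          _ ≤ _ := le_self_add
  · intro L hL j hj
    have hjN : j ≠ N := by simp [Finset.mem_Icc] at hj; omega
    apply Finset.le_inf'
    intro A hA
    rw [Finset.mem_powerset] at hA
    by_cases hNA : N ∈ A
    · calc (1:ℝ≥0) ≤ L := hL
        _ = ℓ L N := by rw [hℓ, if_pos rfl]
        _ ≤ A.sup (ℓ L) := Finset.le_sup hNA
        _ ≤ _ := le_self_add
    · have hNin : N ∈ ({N, j} : Finset ℕ) \ A := by
        simp [hNA]
      by_cases hjA : j ∈ A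
      · have h1 : (1:ℝ≥0)/2 ≤ A.sup (ℓ L) := by
          calc (1:ℝ≥0)/2 = ℓ L j := by rw [hℓ, if_neg hjN]
            _ ≤ _ := Finset.le_sup hjA
        have h2 : (1:ℝ≥0)/2 ≤ (({N, j} : Finset ℕ) \ A).sup (r L) := by
          calc (1:ℝ≥0)/2 = r L N := by rw [hr, if_pos rfl]
            _ ≤ _ := Finset.le_sup hNin
        calc (1:ℝ≥0) = 1/2 + 1/2 := by rw [← NNReal.coe_inj]; push_cast; norm_num
          _ ≤ _ := add_le_add h1 h2
      · have hjin : j ∈ ({N, j} : Finset ℕ) \ A := by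
          simp [hjA]
        calc (1:ℝ≥0) ≤ L := hL
          _ = r L j := by rw [hr, if_neg hjN]
          _ ≤ (({N, j} : Finset ℕ) \ A).sup (r L) := Finset.le_sup hjin
          _ ≤ _ := le_add_self
end
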